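/- arXiv:1306.6086 — 14 statements merged into one kernel-verified Lean document; each statement's English description precedes it below -/
import Mathlib

section
/- The Sorgenfrey line (the real numbers with the lower limit topology, generated by the half-open intervals [a,b) with a < b) is ultraparacompact: every open cover of it has a refinement that is a partition of the space into clopen sets. -/
/-- A partition of the space `X` into (nonempty, pairwise disjoint) clopen sets. -/
def IsClopenPartition (X : Type*) [TopologicalSpace X] (P : Set (Set X)) : Prop :=
  (∀ S ∈ P, IsClopen S) ∧ (∀ S ∈ P, S.Nonempty) ∧
    (∀ S ∈ P, ∀ T ∈ P, S ≠ T → S ∩ T = ∅) ∧ ⋃₀ P = Set.univ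

/-- A space is ultraparacompact if every open cover has a refinement that is a
partition of the space into clopen sets. -/
def Ultraparacompact (X : Type*) [TopologicalSpace X] : Prop :=
  ∀ 𝒰 : Set (Set X), (∀ U ∈ 𝒰, IsOpen U) → ⋃₀ 𝒰 = Set.univ →
    ∃ P : Set (Set X), IsClopenPartition X P ∧ ∀ S ∈ P, ∃ U ∈ 𝒰, S ⊆ U

/-- A space is ultranormal if any two disjoint closed sets are separated by a clopen set. -/
def Ultranormal (X : Type*) [TopologicalSpace X] : Prop :=
  ∀ R S : Set X, IsClosed R → IsClosed S → Disjoint R S →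
    ∃ C : Set X, IsClopen C ∧ R ⊆ C ∧ S ∩ C = ∅

/-- A space is zero-dimensional if the clopen sets form a basis for the topology. -/
def ZeroDimensional (X : Type*) [TopologicalSpace X] : Prop :=
  TopologicalSpace.IsTopologicalBasis {s : Set X | IsClopen s}

namespace SorgenfreyAux

/-- The Sorgenfrey topology on ℝ. -/
def τS : TopologicalSpace ℝ :=
  TopologicalSpace.generateFrom {s : Set ℝ | ∃ a b : ℝ, a < b ∧ s = Set.Ico a b}

lemma basis :
    @TopologicalSpace.IsTopologicalBasis ℝ τS {s : Set ℝ | ∃ a b : ℝ, a < b ∧ s = Set.Ico a b} := by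
  letI : TopologicalSpace ℝ := τS
  refine ⟨?_, ?_, rfl⟩
  · rintro s ⟨a, b, hab, rfl⟩ t ⟨c, d, hcd, rfl⟩ x ⟨⟨hax, hxb⟩, ⟨hcx, hxd⟩⟩
    refine ⟨Set.Ico (max a c) (min b d),
      ⟨max a c, min b d, lt_of_le_of_lt (max_le hax hcx) (lt_min hxb hxd), rfl⟩,
      ⟨max_le hax hcx, lt_min hxb hxd⟩, ?_⟩
    intro y ⟨hy1, hy2⟩
    exact ⟨⟨le_trans (le_max_left _ _) hy1, lt_of_lt_of_le hy2 (min_le_left _ _)⟩,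
      ⟨le_trans (le_max_right _ _) hy1, lt_of_lt_of_le hy2 (min_le_right _ _)⟩⟩
  · apply Set.eq_univ_of_forall
    intro x
    exact ⟨Set.Ico x (x + 1), ⟨x, x + 1, by linarith, rfl⟩, ⟨le_rfl, by linarith⟩⟩

lemma isOpen_Ico (a b : ℝ) : @IsOpen ℝ τS (Set.Ico a b) := by
  letI : TopologicalSpace ℝ := τS
  rcases lt_or_ge a b with h | h
  · exact TopologicalSpace.GenerateOpen.basic _ ⟨a, b, h, rfl⟩
  · rw [Set.Ico_eq_empty (not_lt.mpr h)]; exact isOpen_empty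

lemma isOpen_Iio (a : ℝ) : @IsOpen ℝ τS (Set.Iio a) := by
  letI : TopologicalSpace ℝ := τS
  have : Set.Iio a = ⋃ n : ℕ, Set.Ico (a - (n + 1)) a := by
    ext x
    simp only [Set.mem_Iio, Set.mem_iUnion, Set.mem_Ico]
    constructor
    · intro hx
      obtain ⟨n, hn⟩ := exists_nat_ge (a - x)
      exact ⟨n, by linarith, hx⟩
    · rintro ⟨n, _, h⟩; exact h
  rw [this]
  exact isOpen_iUnion fun n => isOpen_Ico _ _
  
lemma isOpen_Ici (a : ℝ) : @IsOpen ℝ τS (Set.Ici a) := by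
  letI : TopologicalSpace ℝ := τS
  have : Set.Ici a = ⋃ n : ℕ, Set.Ico a (a + (n + 1)) := by
    ext x
    simp only [Set.mem_Ici, Set.mem_iUnion, Set.mem_Ico]
    constructor
    · intro hx
      obtain ⟨n, hn⟩ := exists_nat_ge (x - a)
      exact ⟨n, hx, by linarith⟩
    · rintro ⟨n, h, _⟩; exact h
  rw [this]
  exact isOpen_iUnion fun n => isOpen_Ico _ _

lemma isClopen_Ico (a b : ℝ) : @IsClopen ℝ τS (Set.Ico a b) := by
  letI : TopologicalSpace ℝ := τS
  refine ⟨?_, isOpen_Ico a b⟩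
  rw [← isOpen_compl_iff]
  have : (Set.Ico a b)ᶜ = Set.Iio a ∪ Set.Ici b := by
    ext x
    simp only [Set.mem_compl_iff, Set.mem_Ico, Set.mem_union, Set.mem_Iio, Set.mem_Ici,
      not_and, not_lt]
    constructor
    · intro h
      rcases lt_or_ge x a with h' | h'
      · exact Or.inl h'
      · exact Or.inr (h h')
    · rintro (h | h) h'
      · exact absurd h' (not_le.mpr h)
      · exact h
  rw [this]
  exact (isOpen_Iio a).union (isOpen_Ici b)

lemma exists_Ico_subset {U : Set ℝ} (hU : @IsOpen ℝ τS U) {x : ℝ} (hx : x ∈ U) :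
    ∃ b, x < b ∧ Set.Ico x b ⊆ U := by
  letI : TopologicalSpace ℝ := τS
  obtain ⟨v, ⟨a, b, hab, rfl⟩, ⟨hax, hxb⟩, hvU⟩ := basis.isOpen_iff.mp hU x hx
  exact ⟨b, hxb, fun y hy => hvU ⟨le_trans hax hy.1, hy.2⟩⟩

lemma isClopen_diff (I : ℕ → Set ℝ) (hI : ∀ n, @IsClopen ℝ τS (I n)) (n : ℕ) :
    @IsClopen ℝ τS (I n \ ⋃ m : Fin n, I m) := by
  letI : TopologicalSpace ℝ := τS
  exact (hI n).diff ⟨isClosed_iUnion_of_finite fun m => (hI m).1,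
    isOpen_iUnion fun m => (hI m).2⟩

end SorgenfreyAux

/-- The Sorgenfrey line (ℝ with the lower limit topology, generated by the
half-open intervals `[a, b)` with `a < b`) is ultraparacompact. -/
theorem sorgenfrey_ultraparacompact :
    @Ultraparacompact ℝ
      (TopologicalSpace.generateFrom {s : Set ℝ | ∃ a b : ℝ, a < b ∧ s = Set.Ico a b}) := by
  show @Ultraparacompact ℝ SorgenfreyAux.τS
  intro 𝒰 hU hcov
  -- Step 1: for each x pick f x > x with [x, f x) contained in a member of the cover.
  have step1 : ∀ x : ℝ, ∃ b : ℝ, x < b ∧ ∃ U ∈ 𝒰, Set.Ico x b ⊆ U := by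
    intro x
    have hx : x ∈ ⋃₀ 𝒰 := hcov ▸ Set.mem_univ x
    obtain ⟨U, hU𝒰, hxU⟩ := hx
    obtain ⟨b, hxb, hsub⟩ := SorgenfreyAux.exists_Ico_subset (hU U hU𝒰) hxU
    exact ⟨b, hxb, U, hU𝒰, hsub⟩
  choose f hf hfU using step1
  -- Step 2: Lindelöf-style argument to find a countable subfamily of the [x, f x) covering ℝ.
  set B : Set ℝ := {y | ∀ x, y ∉ Set.Ioo x (f x)} with hBdef
  have hBc : B.Countable := by
    have hq : ∀ y : ℝ, ∃ q : ℚ, y < (q : ℝ) ∧ (q : ℝ) < f y := fun y => exists_rat_btwn (hf y)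
    choose q hq1 hq2 using hq
    have inj : Set.InjOn q B := by
      intro y hy y' hy' hqq
      by_contra hne
      rcases lt_or_gt_of_ne hne with h | h
      · have hle : f y ≤ y' := by
          by_contra hlt
          exact hy' y ⟨h, lt_of_not_ge hlt⟩
        have : (q y : ℝ) < (q y' : ℝ) :=
          lt_of_lt_of_le (hq2 y) (hle.trans (le_of_lt (hq1 y')))
        rw [hqq] at this
        exact lt_irrefl _ this
      · have hle : f y' ≤ y := by
          by_contra hlt
          exact hy y' ⟨h, lt_of_not_ge hlt⟩
        have : (q y' : ℝ) < (q y : ℝ) :=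
          lt_of_lt_of_le (hq2 y') (hle.trans (le_of_lt (hq1 y)))
        rw [hqq] at this
        exact lt_irrefl _ this
    exact Set.countable_of_injective_of_countable_image inj (Set.to_countable _)
  obtain ⟨T, hTc, hTeq⟩ :=
    TopologicalSpace.isOpen_iUnion_countable (fun x => Set.Ioo x (f x)) (fun x => isOpen_Ioo)
  have hcover : ∀ y : ℝ, ∃ x ∈ B ∪ T, y ∈ Set.Ico x (f x) := by
    intro y
    by_cases hy : y ∈ B
    · exact ⟨y, Or.inl hy, le_rfl, hf y⟩
    · have hy' : ∃ x, y ∈ Set.Ioo x (f x) := by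
        by_contra h
        push_neg at h
        exact hy h
      obtain ⟨x, hx⟩ := hy'
      have : y ∈ ⋃ x ∈ T, Set.Ioo x (f x) := by
        rw [hTeq]
        exact Set.mem_iUnion.2 ⟨x, hx⟩
      obtain ⟨x', hx'T, hx'⟩ := Set.mem_iUnion₂.mp this
      exact ⟨x', Or.inr hx'T, le_of_lt hx'.1, hx'.2⟩
  obtain ⟨x0, hx0S, _⟩ := hcover 0
  obtain ⟨g, hg⟩ := Set.Countable.exists_eq_range (hBc.union hTc) ⟨x0, hx0S⟩
  -- The countable family of intervals covering ℝ.
  set I : ℕ → Set ℝ := fun n => Set.Ico (g n) (f (g n)) with hIdef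
  have hIcover : ∀ y : ℝ, ∃ n, y ∈ I n := by
    intro y
    obtain ⟨x, hxS, hyx⟩ := hcover y
    rw [hg] at hxS
    obtain ⟨n, rfl⟩ := hxS
    exact ⟨n, hyx⟩
  have hIclopen : ∀ n, @IsClopen ℝ SorgenfreyAux.τS (I n) :=
    fun n => SorgenfreyAux.isClopen_Ico _ _
  -- Step 3: disjointify.
  set D : ℕ → Set ℝ := fun n => I n \ ⋃ m : Fin n, I m with hDdef
  have hDclopen : ∀ n, @IsClopen ℝ SorgenfreyAux.τS (D n) :=
    SorgenfreyAux.isClopen_diff I hIclopen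
  have hDmem : ∀ y : ℝ, ∃ n, y ∈ D n := by
    intro y
    obtain ⟨n, hn⟩ := hIcover y
    have hex : ∃ n, y ∈ I n := ⟨n, hn⟩
    refine ⟨Nat.find hex, Nat.find_spec hex, ?_⟩
    intro hy
    obtain ⟨⟨m, hmn⟩, hym⟩ := Set.mem_iUnion.mp hy
    exact Nat.find_min hex hmn hym
  have hDdisj : ∀ n m, n < m → D m ∩ D n = ∅ := by
    intro n m hnm
    ext y
    simp only [Set.mem_inter_iff, Set.mem_empty_iff_false, iff_false, not_and]
    intro hym hyn
    exact hym.2 (Set.mem_iUnion.2 ⟨⟨n, hnm⟩, hyn.1⟩)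
  refine ⟨{s | s.Nonempty ∧ ∃ n, s = D n}, ⟨?_, ?_, ?_, ?_⟩, ?_⟩
  · rintro S ⟨-, n, rfl⟩
    exact hDclopen n
  · rintro S ⟨hne, -⟩
    exact hne
  · rintro S ⟨-, n, rfl⟩ T ⟨-, m, rfl⟩ hne
    rcases lt_trichotomy n m with h | h | h
    · rw [Set.inter_comm]; exact hDdisj n m h
    · exact absurd (by rw [h]) hne
    · exact hDdisj m n h
  · apply Set.eq_univ_of_forall
    intro y
    obtain ⟨n, hn⟩ := hDmem y
    exact ⟨D n, ⟨⟨y, hn⟩, n, rfl⟩, hn⟩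
  · rintro S ⟨-, n, rfl⟩
    obtain ⟨U, hU𝒰, hsub⟩ := hfU (g n)
    exact ⟨U, hU𝒰, fun y hy => hsub hy.1⟩
end

section
/- If f : ω₁ → ω₁ is a function such that f(α) < α for every nonzero countable ordinal α, then there exists an ordinal β < ω₁ such that f(α) = β for uncountably many α < ω₁. -/
/-!
If every fibre of `f` below a regular `κ > ℵ₀` had fewer than `κ` points, then by regularity each
sublevel set `{α < κ | f α ≤ γ}` would be bounded below `κ`, say by `g γ`. The closure point
`λ = sup_n g^[n] 1` of `g` is still below `κ` because `cf κ > ℵ₀`, and `f λ < λ` gives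
`f λ ≤ g^[n] 1` for some `n`, whence `λ < g^[n+1] 1 ≤ λ`.
-/

open Cardinal Ordinal Set

universe u

namespace Ordinal

theorem exists_ne_zero_le_apply_of_sublevel_bounded {c : Ordinal} (hc : ℵ₀ < c.cof)
    (f : Ordinal → Ordinal) (hf : ∀ γ < c, ∃ δ < c, ∀ α < c, f α ≤ γ → α < δ) :
    ∃ α < c, α ≠ 0 ∧ α ≤ f α := by
  choose! g hgc hg using hf
  have h1c : 1 < c := one_lt_card.1 (one_lt_aleph0.trans (hc.trans_le (cof_le_card c)))
  have hnfp : nfp g 1 < c := nfp_lt_ord hc hgc h1c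
  refine ⟨nfp g 1, hnfp, (zero_lt_one.trans_le (le_nfp g 1)).ne', ?_⟩
  by_contra! hlt
  obtain ⟨n, hn⟩ := lt_nfp_iff.1 hlt
  have hnext := hg _ ((iterate_le_nfp g 1 n).trans_lt hnfp) _ hnfp hn.le
  rw [← Function.iterate_succ_apply' g] at hnext
  exact (iterate_le_nfp g 1 (n + 1)).not_gt hnext

theorem mk_Iic_lt_lift {κ : Cardinal.{u}} (hκ : ℵ₀ ≤ κ) {γ : Ordinal.{u}} (hγ : γ < κ.ord) :
    #(Iic γ) < Cardinal.lift.{u + 1} κ := by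
  rw [← Order.Iio_succ, Cardinal.mk_Iio_ordinal, Cardinal.lift_lt, ← lt_ord]
  exact (isSuccLimit_ord hκ).succ_lt hγ

theorem exists_lt_ord_forall_lt_of_mk_lt {κ : Cardinal.{u}} (hκ : κ.IsRegular)
    {s : Set Ordinal.{u}} (hs : s ⊆ Iio κ.ord) (hsκ : #s < Cardinal.lift.{u + 1} κ) :
    ∃ δ < κ.ord, ∀ α ∈ s, α < δ := by
  have hsup : sSup s < κ.ord := sSup_lt_of_lt_cof (by rwa [← lift_cof, hκ.cof_ord]) hs
  refine ⟨Order.succ (sSup s), (isSuccLimit_ord hκ.aleph0_le).succ_lt hsup, fun α hα => ?_⟩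
  exact Order.lt_succ_iff.2 (le_csSup ⟨κ.ord, fun _ h => (hs h).le⟩ hα)

end Ordinal

namespace Cardinal.IsRegular

variable {κ : Cardinal.{u}}

theorem sublevel_bounded_of_mk_fiber_lt (hκ : κ.IsRegular) (f : Ordinal.{u} → Ordinal.{u})
    (hfib : ∀ β < κ.ord, #{α | α < κ.ord ∧ f α = β} < Cardinal.lift.{u + 1} κ)
    {γ : Ordinal} (hγ : γ < κ.ord) : ∃ δ < κ.ord, ∀ α < κ.ord, f α ≤ γ → α < δ := by
  have hsub : {α | α < κ.ord ∧ f α ≤ γ} = ⋃ β ∈ Iic γ, {α | α < κ.ord ∧ f α = β} := by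
    ext α; simp
  have hsmall : #{α | α < κ.ord ∧ f α ≤ γ} < Cardinal.lift.{u + 1} κ := by
    rw [hsub, card_biUnion_lt_iff_forall_of_isRegular hκ.lift (mk_Iic_lt_lift hκ.aleph0_le hγ)]
    exact fun β hβ => hfib β (lt_of_le_of_lt hβ hγ)
  obtain ⟨δ, hδ, hlt⟩ := exists_lt_ord_forall_lt_of_mk_lt hκ (fun α hα => hα.1) hsmall
  exact ⟨δ, hδ, fun α hα hfα => hlt α ⟨hα, hfα⟩⟩

theorem exists_lift_le_mk_fiber_of_regressive (hκ : κ.IsRegular) (hκ₀ : ℵ₀ < κ)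
    (f : Ordinal.{u} → Ordinal.{u})
    (hf : ∀ α < κ.ord, α ≠ 0 → f α < α) :
    ∃ β < κ.ord, Cardinal.lift.{u + 1} κ ≤ #{α : Ordinal // α < κ.ord ∧ f α = β} := by
  by_contra! hfib
  obtain ⟨α, hα, hα₀, hle⟩ := exists_ne_zero_le_apply_of_sublevel_bounded
    (by rwa [hκ.cof_ord]) f fun γ hγ => hκ.sublevel_bounded_of_mk_fiber_lt f hfib hγ
  exact (hf α hα hα₀).not_ge hle

end Cardinal.IsRegular

open Cardinal in
/-- If `f : ω₁ → ω₁` satisfies `f α < α` for every nonzero `α < ω₁`, then some value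
`β < ω₁` is attained by `f` on an uncountable (cardinality at least `ℵ₁`) set of `α < ω₁`. -/
theorem regressive_constant_on_uncountable (f : Ordinal → Ordinal)
    (hf : ∀ α : Ordinal, α < (aleph 1).ord → α ≠ 0 → f α < α) :
    ∃ β : Ordinal, β < (aleph 1).ord ∧
      aleph 1 ≤ #{α : Ordinal // α < (aleph 1).ord ∧ f α = β} := by
  simpa using isRegular_aleph_one.exists_lift_le_mk_fiber_of_regressive aleph0_lt_aleph_one f hf
end

section
/- The space ω₁ of all countable ordinals with the order topology is ultranormal. -/
/-!
A well-order with its order topology is zero-dimensional (every point has a clopen neighbourhood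
basis of intervals `Ioc l a`, or `{a} = Iic a` at a minimum), its initial segments `Iic δ` are
clopen and compact, and so a compact set has a clopen neighbourhood inside any open set containing
it. Two disjoint closed sets in `ω₁` cannot both be unbounded: they would be clubs, and two clubs
in an order of uncountable cofinality meet. So one of them, say `S`, lies in some `Iic δ`; a
clopen neighbourhood of the compact set `R ∩ Iic δ` missing `S`, together with the clopen set
`Ioi δ`, separates `R` from `S`.
-/

open Cardinal Set

theorem ZeroDimensional.exists_isClopen_between {X : Type*} [TopologicalSpace X]
    (hX : ZeroDimensional X) {K U : Set X} (hK : IsCompact K) (hU : IsOpen U) (hKU : K ⊆ U) :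
    ∃ C, IsClopen C ∧ K ⊆ C ∧ C ⊆ U := by
  refine hK.induction_on ⟨∅, isClopen_empty, subset_rfl, empty_subset U⟩ ?_ ?_ ?_
  · exact fun s t hst ⟨C, hC, htC, hCU⟩ => ⟨C, hC, hst.trans htC, hCU⟩
  · exact fun s t ⟨C, hC, hsC, hCU⟩ ⟨D, hD, htD, hDU⟩ =>
      ⟨C ∪ D, hC.union hD, union_subset_union hsC htD, union_subset hCU hDU⟩
  · intro x hx
    obtain ⟨C, hC, hxC, hCU⟩ := hX.exists_subset_of_mem_open (hKU hx) hU
    exact ⟨C, mem_nhdsWithin_of_mem_nhds (hC.isOpen.mem_nhds hxC), C, hC, subset_rfl, hCU⟩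

section LinearOrder

variable {α : Type*} [LinearOrder α] [TopologicalSpace α] [OrderTopology α]

theorem IsClosed.dirSupClosed {s : Set α} (hs : IsClosed s) : DirSupClosed s :=
  fun _ hds hd _ _ ha => hs.closure_subset_iff.2 hds (ha.mem_closure hd)

theorem IsClosed.isClub_of_not_bddAbove {s : Set α} (hs : IsClosed s) (hs' : ¬ BddAbove s) :
    IsClub s :=
  ⟨hs.dirSupClosed, .of_not_bddAbove hs'⟩

variable [WellFoundedLT α]

theorem isClopen_Iic_of_wellFoundedLT (a : α) : IsClopen (Iic a) :=
  ⟨isClosed_Iic, (isLowerSet_Iic a).isOpen⟩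

theorem isClopen_Ioi_of_wellFoundedLT (a : α) : IsClopen (Ioi a) :=
  ⟨(isUpperSet_Ioi a).isClosed, isOpen_Ioi⟩

theorem zeroDimensional_of_wellFoundedLT : ZeroDimensional α := by
  refine TopologicalSpace.isTopologicalBasis_of_isOpen_of_nhds (fun C hC => hC.isOpen) ?_
  intro a U ha hU
  by_cases hmin : IsMin a
  · exact ⟨Iic a, isClopen_Iic_of_wellFoundedLT a, self_mem_Iic,
      fun b hb => (hmin.eq_of_ge hb) ▸ ha⟩
  · obtain ⟨b, hba⟩ := not_isMin_iff.1 hmin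
    obtain ⟨l, hla, hlU⟩ := exists_Ioc_subset_of_mem_nhds (hU.mem_nhds ha) ⟨b, hba⟩
    exact ⟨Ioc l a, (isClopen_Ioi_of_wellFoundedLT l).inter (isClopen_Iic_of_wellFoundedLT a),
      right_mem_Ioc.2 hla, hlU⟩

theorem isCompact_Iic_of_wellFoundedLT (a : α) : IsCompact (Iic a) := by
  have : Nonempty α := ⟨a⟩
  let := WellFoundedLT.toOrderBot α
  let := WellFoundedLT.conditionallyCompleteLinearOrderBot α
  exact Icc_bot (a := a) ▸ isCompact_Icc

theorem bddAbove_or_bddAbove_of_disjoint [Nonempty α] (hα : Order.cof α ≠ ℵ₀) {R S : Set α}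
    (hR : IsClosed R) (hS : IsClosed S) (hRS : Disjoint R S) : BddAbove R ∨ BddAbove S := by
  by_contra! h
  have hclub := (hR.isClub_of_not_bddAbove h.1).inter hα (hS.isClub_of_not_bddAbove h.2)
  exact not_disjoint_iff_nonempty_inter.2 hclub.nonempty hRS

theorem exists_isClopen_separating_of_bddAbove {R S : Set α} (hR : IsClosed R) (hS : IsClosed S)
    (hRS : Disjoint R S) (hSb : BddAbove S) : ∃ C, IsClopen C ∧ R ⊆ C ∧ Disjoint C S := by
  obtain ⟨δ, hδ⟩ := hSb
  obtain ⟨C, hC, hRC, hCS⟩ := zeroDimensional_of_wellFoundedLT.exists_isClopen_between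
    ((isCompact_Iic_of_wellFoundedLT δ).inter_left hR) hS.isOpen_compl
    (inter_subset_left.trans hRS.subset_compl_right)
  refine ⟨C ∪ Ioi δ, hC.union (isClopen_Ioi_of_wellFoundedLT δ), fun x hx => ?_, ?_⟩
  · rcases le_or_gt x δ with hxδ | hxδ
    exacts [Or.inl (hRC ⟨hx, hxδ⟩), Or.inr hxδ]
  · exact disjoint_union_left.2 ⟨subset_compl_iff_disjoint_right.1 hCS,
      disjoint_left.2 fun x hxδ hxS => (hδ hxS).not_gt hxδ⟩

theorem ultranormal_of_cof_ne_aleph0 [Nonempty α] (hα : Order.cof α ≠ ℵ₀) : Ultranormal α := by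
  intro R S hR hS hRS
  rcases bddAbove_or_bddAbove_of_disjoint hα hR hS hRS with hRb | hSb
  · obtain ⟨C, hC, hSC, hCR⟩ := exists_isClopen_separating_of_bddAbove hS hR hRS.symm hRb
    exact ⟨Cᶜ, hC.compl, hCR.subset_compl_left, hSC.disjoint_compl_right.inter_eq⟩
  · obtain ⟨C, hC, hRC, hCS⟩ := exists_isClopen_separating_of_bddAbove hR hS hRS hSb
    exact ⟨C, hC, hRC, hCS.symm.inter_eq⟩

end LinearOrder

open Cardinal in
/-- The space `ω₁` of countable ordinals, with the order topology, is ultranormal. -/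
theorem omega1_ultranormal :
    @Ultranormal {α : Ordinal // α < (aleph 1).ord}
      (Preorder.topology {α : Ordinal // α < (aleph 1).ord}) := by
  let := Preorder.topology {α : Ordinal // α < (aleph 1).ord}
  have : OrderTopology {α : Ordinal // α < (aleph 1).ord} := ⟨rfl⟩
  have : Nonempty {α : Ordinal // α < (aleph 1).ord} :=
    ⟨⟨0, (isSuccLimit_ord (aleph0_le_aleph 1)).pos⟩⟩
  refine ultranormal_of_cof_ne_aleph0 ?_
  change Order.cof (Iio (aleph 1).ord) ≠ ℵ₀
  rw [Ordinal.cof_Iio, ← Ordinal.lift_cof, isRegular_aleph_one.cof_ord]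
  simpa using aleph0_lt_aleph_one.ne'
end

section
/- Every Lindelöf zero-dimensional Hausdorff space is ultraparacompact. -/
/-- Every Lindelöf zero-dimensional Hausdorff space is ultraparacompact. -/
theorem lindelof_zeroDimensional_ultraparacompact (X : Type*) [TopologicalSpace X]
    [T2Space X] [LindelofSpace X] (hX : ZeroDimensional X) :
    Ultraparacompact X := by
  classical
  intro 𝒰 hopen hcov
  rcases isEmpty_or_nonempty X with hE | hNE
  · refine ⟨∅, ⟨by simp, by simp, by simp, ?_⟩, by simp⟩
    simp [Set.univ_eq_empty_iff.2 hE]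
  have hx : ∀ x : X, ∃ S : Set X, IsClopen S ∧ x ∈ S ∧ ∃ U ∈ 𝒰, S ⊆ U := by
    intro x
    have hxu : x ∈ ⋃₀ 𝒰 := hcov ▸ Set.mem_univ x
    obtain ⟨U, hU, hxU⟩ := hxu
    obtain ⟨S, hS, hxS, hSU⟩ := hX.exists_subset_of_mem_open hxU (hopen U hU)
    exact ⟨S, hS, hxS, U, hU, hSU⟩
  choose C hCclopen hxC hCsub using hx
  obtain ⟨r, hrc, hrcov⟩ := isLindelof_univ.elim_countable_subcover C
    (fun x => (hCclopen x).2) (fun x _ => Set.mem_iUnion.2 ⟨x, hxC x⟩)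
  have hrne : r.Nonempty := by
    obtain ⟨x⟩ := hNE
    have := hrcov (Set.mem_univ x)
    simp only [Set.mem_iUnion] at this
    obtain ⟨i, hi, -⟩ := this
    exact ⟨i, hi⟩
  obtain ⟨f, hf⟩ := hrc.exists_eq_range hrne
  set g : ℕ → Set X := fun n => C (f n) with hg
  have hgcover : ∀ x : X, ∃ n, x ∈ g n := by
    intro x
    have := hrcov (Set.mem_univ x)
    simp only [Set.mem_iUnion] at this
    obtain ⟨i, hi, hxi⟩ := this
    rw [hf] at hi
    obtain ⟨n, rfl⟩ := hi
    exact ⟨n, hxi⟩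
  set D : ℕ → Set X := fun n => g n \ ⋃ m ∈ Finset.range n, g m with hD
  have hDclopen : ∀ n, IsClopen (D n) :=
    fun n => (hCclopen _).diff (isClopen_biUnion_finset (fun m _ => hCclopen _))
  have hDsub : ∀ n, D n ⊆ g n := fun n => Set.diff_subset
  have hDdisj : ∀ m n, m ≠ n → D m ∩ D n = ∅ := by
    intro m n hmn
    rcases lt_or_gt_of_ne hmn with h | h
    · apply Set.eq_empty_of_forall_notMem
      rintro x ⟨hxm, hxn⟩
      exact hxn.2 (Set.mem_biUnion (Finset.mem_range.2 h) hxm.1)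
    · apply Set.eq_empty_of_forall_notMem
      rintro x ⟨hxm, hxn⟩
      exact hxm.2 (Set.mem_biUnion (Finset.mem_range.2 h) hxn.1)
  have hDcover : ∀ x : X, ∃ n, x ∈ D n := by
    intro x
    have h := hgcover x
    refine ⟨Nat.find h, Nat.find_spec h, ?_⟩
    simp only [Set.mem_iUnion, not_exists]
    intro m hm
    exact Nat.find_min h (Finset.mem_range.1 hm)
  refine ⟨{S | ∃ n, S = D n ∧ S.Nonempty}, ⟨?_, ?_, ?_, ?_⟩, ?_⟩
  · rintro S ⟨n, rfl, -⟩; exact hDclopen n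
  · rintro S ⟨n, rfl, h⟩; exact h
  · rintro S ⟨m, rfl, -⟩ T ⟨n, rfl, -⟩ hST
    exact hDdisj m n (fun h => hST (by rw [h]))
  · apply Set.eq_univ_of_forall
    intro x
    obtain ⟨n, hn⟩ := hDcover x
    exact ⟨D n, ⟨n, rfl, ⟨x, hn⟩⟩, hn⟩
  · rintro S ⟨n, rfl, -⟩
    obtain ⟨U, hU, hsub⟩ := hCsub (f n)
    exact ⟨U, hU, (hDsub n).trans hsub⟩
end

section
/- Let X be a locally compact zero-dimensional Hausdorff space. Then X is ultraparacompact if and only if X can be partitioned into a family of compact open sets. -/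
open Set Function

section

variable {X : Type*} [TopologicalSpace X]

theorem isClopen_disjointed {ι : Type*} [Preorder ι] [LocallyFiniteOrderBot ι] {f : ι → Set X}
    (hf : ∀ i, IsClopen (f i)) (i : ι) : IsClopen (disjointed f i) :=
  disjointedRec (fun _ j ht => ht.diff (hf j)) (hf i)

theorem ZeroDimensional.exists_isClopen_isCompact_mem [LocallyCompactSpace X]
    (hX : ZeroDimensional X) (x : X) : ∃ C, IsClopen C ∧ IsCompact C ∧ x ∈ C := by
  obtain ⟨K, hK, hKx⟩ := exists_compact_mem_nhds x
  obtain ⟨C, hC, hxC, hCK⟩ :=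
    hX.exists_subset_of_mem_open (mem_interior_iff_mem_nhds.2 hKx) isOpen_interior
  exact ⟨C, hC, hK.of_isClosed_subset hC.isClosed (hCK.trans interior_subset), hxC⟩

theorem IsCompact.exists_finite_isClopen_cover (hX : ZeroDimensional X) {S : Set X}
    (hS : IsCompact S) (hSo : IsOpen S) {𝒰 : Set (Set X)} (h𝒰 : ∀ U ∈ 𝒰, IsOpen U)
    (hcov : S ⊆ ⋃₀ 𝒰) :
    ∃ (n : ℕ) (f : Fin n → Set X), (∀ k, IsClopen (f k) ∧ ∃ U ∈ 𝒰, f k ⊆ U) ∧ ⋃ k, f k = S := by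
  set 𝒞 := {C : Set X | IsClopen C ∧ C ⊆ S ∧ ∃ U ∈ 𝒰, C ⊆ U}
  have h𝒞 : S ⊆ ⋃ C : 𝒞, C := by
    intro x hx
    obtain ⟨U, hU, hxU⟩ := hcov hx
    obtain ⟨C, hC, hxC, hCUS⟩ :=
      hX.exists_subset_of_mem_open (mem_inter hxU hx) ((h𝒰 U hU).inter hSo)
    exact mem_iUnion.2
      ⟨⟨C, hC, hCUS.trans inter_subset_right, U, hU, hCUS.trans inter_subset_left⟩, hxC⟩
  obtain ⟨t, ht⟩ := hS.elim_finite_subcover (fun C : 𝒞 => (C : Set X)) (fun C => C.2.1.isOpen) h𝒞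
  let e := t.equivFin.symm
  refine ⟨t.card, fun k => (e k : 𝒞), fun k => ⟨(e k : 𝒞).2.1, (e k : 𝒞).2.2.2⟩, ?_⟩
  refine (iUnion_subset fun k => (e k : 𝒞).2.2.1).antisymm fun x hx => ?_
  obtain ⟨C, hCt, hxC⟩ := mem_iUnion₂.1 (ht hx)
  exact mem_iUnion.2 ⟨e.symm ⟨C, hCt⟩, by simpa [e] using hxC⟩

theorem isClopenPartition_of_pieces {P : Set (Set X)}
    (hPdisj : ∀ S ∈ P, ∀ T ∈ P, S ≠ T → S ∩ T = ∅) (hPX : ⋃₀ P = univ) {ι : Set X → Type*}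
    {g : ∀ S, ι S → Set X} (hg : ∀ S ∈ P, ∀ i, IsClopen (g S i))
    (hgdisj : ∀ S ∈ P, Pairwise (Disjoint on g S)) (hgS : ∀ S ∈ P, ⋃ i, g S i = S) :
    IsClopenPartition X {D | D.Nonempty ∧ ∃ S ∈ P, ∃ i, g S i = D} := by
  have hgsub : ∀ S ∈ P, ∀ i, g S i ⊆ S := fun S hS i =>
    (subset_iUnion (g S) i).trans (hgS S hS).subset
  refine ⟨?_, fun D hD => hD.1, ?_, ?_⟩
  · rintro _ ⟨-, S, hS, i, rfl⟩
    exact hg S hS i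
  · rintro _ ⟨-, S, hS, i, rfl⟩ _ ⟨-, T, hT, j, rfl⟩ hne
    by_cases hST : S = T
    · subst hST
      exact disjoint_iff_inter_eq_empty.1 (hgdisj S hS fun hij => hne (hij ▸ rfl))
    · exact subset_empty_iff.1 <|
        (inter_subset_inter (hgsub S hS i) (hgsub T hT j)).trans (hPdisj S hS T hT hST).subset
  · refine eq_univ_of_forall fun x => ?_
    obtain ⟨S, hS, hxS⟩ : x ∈ ⋃₀ P := hPX ▸ mem_univ x
    obtain ⟨i, hxi⟩ := mem_iUnion.1 ((hgS S hS).symm ▸ hxS)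
    exact ⟨g S i, ⟨⟨x, hxi⟩, S, hS, i, rfl⟩, hxi⟩

theorem Ultraparacompact.exists_partition_isCompact_isOpen [LocallyCompactSpace X]
    (hX : ZeroDimensional X) (h : Ultraparacompact X) :
    ∃ P : Set (Set X), (∀ S ∈ P, IsCompact S ∧ IsOpen S) ∧ (∀ S ∈ P, S.Nonempty) ∧
      (∀ S ∈ P, ∀ T ∈ P, S ≠ T → S ∩ T = ∅) ∧ ⋃₀ P = univ := by
  have hcov : ⋃₀ {C : Set X | IsClopen C ∧ IsCompact C} = univ := eq_univ_of_forall fun x => by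
    obtain ⟨C, hC, hCc, hxC⟩ := hX.exists_isClopen_isCompact_mem x
    exact ⟨C, ⟨hC, hCc⟩, hxC⟩
  obtain ⟨P, ⟨hPclopen, hPne, hPdisj, hPX⟩, hPref⟩ := h _ (fun C hC => hC.1.isOpen) hcov
  refine ⟨P, fun S hS => ⟨?_, (hPclopen S hS).isOpen⟩, hPne, hPdisj, hPX⟩
  obtain ⟨C, hC, hSC⟩ := hPref S hS
  exact hC.2.of_isClosed_subset (hPclopen S hS).isClosed hSC

theorem ZeroDimensional.ultraparacompact_of_isCompact_isOpen_partition (hX : ZeroDimensional X)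
    {P : Set (Set X)} (hP : ∀ S ∈ P, IsCompact S ∧ IsOpen S)
    (hPdisj : ∀ S ∈ P, ∀ T ∈ P, S ≠ T → S ∩ T = ∅) (hPX : ⋃₀ P = univ) :
    Ultraparacompact X := by
  intro 𝒰 h𝒰 h𝒰X
  choose! n f hf hfS using fun S (hS : S ∈ P) =>
    (hP S hS).1.exists_finite_isClopen_cover hX (hP S hS).2 h𝒰 (h𝒰X ▸ subset_univ S)
  refine ⟨_, isClopenPartition_of_pieces hPdisj hPX (g := fun S => disjointed (f S))
    (fun S hS => isClopen_disjointed fun k => (hf S hS k).1) (fun _ _ => disjoint_disjointed _)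
    (fun S hS => iUnion_disjointed.trans (hfS S hS)), ?_⟩
  rintro _ ⟨-, S, hS, k, rfl⟩
  obtain ⟨U, hU, hkU⟩ := (hf S hS k).2
  exact ⟨U, hU, (disjointed_subset _ k).trans hkU⟩

end

theorem locallyCompact_ultraparacompact_iff_general (X : Type*) [TopologicalSpace X]
    [LocallyCompactSpace X] (hX : ZeroDimensional X) :
    Ultraparacompact X ↔
      ∃ P : Set (Set X), (∀ S ∈ P, IsCompact S ∧ IsOpen S) ∧ (∀ S ∈ P, S.Nonempty) ∧
        (∀ S ∈ P, ∀ T ∈ P, S ≠ T → S ∩ T = ∅) ∧ ⋃₀ P = Set.univ :=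
  ⟨fun h => h.exists_partition_isCompact_isOpen hX,
    fun ⟨_, hP, _, hPdisj, hPX⟩ =>
      hX.ultraparacompact_of_isCompact_isOpen_partition hP hPdisj hPX⟩

/-- A locally compact zero-dimensional Hausdorff space is ultraparacompact if and only if
it can be partitioned into a family of compact open sets. -/
theorem locallyCompact_ultraparacompact_iff (X : Type*) [TopologicalSpace X] [T2Space X]
    [LocallyCompactSpace X] (hX : ZeroDimensional X) :
    Ultraparacompact X ↔
      ∃ P : Set (Set X), (∀ S ∈ P, IsCompact S ∧ IsOpen S) ∧ (∀ S ∈ P, S.Nonempty) ∧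
        (∀ S ∈ P, ∀ T ∈ P, S ≠ T → S ∩ T = ∅) ∧ ⋃₀ P = Set.univ :=
  locallyCompact_ultraparacompact_iff_general X hX
end

section
/- Let X be a Hausdorff space. If every open subspace of X is ultraparacompact, then every subspace of X is ultraparacompact. -/
/-!
An open cover of a subspace `A ⊆ X` is the trace of a family of open sets of `X`, whose union
`W` is an open set containing `A`. A clopen partition of `W` refining that family pulls back,
along the inclusion `A → W`, to a clopen partition of `A` refining the original cover.
-/

section

open Set Topology

variable {Y Z : Type*} [TopologicalSpace Y] [TopologicalSpace Z] {f : Y → Z}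

theorem IsClopenPartition.preimage (hf : Continuous f) {P : Set (Set Z)}
    (hP : IsClopenPartition Z P) : IsClopenPartition Y (preimage f '' P \ {∅}) := by
  obtain ⟨hclopen, -, hdisj, hcover⟩ := hP
  refine ⟨?_, ?_, ?_, ?_⟩
  · rintro _ ⟨⟨S, hS, rfl⟩, -⟩
    exact (hclopen S hS).preimage hf
  · rintro Q ⟨-, hQ⟩
    exact nonempty_iff_ne_empty.mpr hQ
  · rintro _ ⟨⟨S, hS, rfl⟩, -⟩ _ ⟨⟨T, hT, rfl⟩, -⟩ hne
    rw [← preimage_inter, hdisj S hS T hT (ne_of_apply_ne _ hne), preimage_empty]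
  · refine eq_univ_of_forall fun y => ?_
    obtain ⟨S, hS, hyS⟩ := mem_sUnion.mp (hcover ▸ mem_univ (f y) : f y ∈ ⋃₀ P)
    exact ⟨f ⁻¹' S, ⟨⟨S, hS, rfl⟩, nonempty_iff_ne_empty.mp ⟨y, hyS⟩⟩, hyS⟩

theorem Ultraparacompact.exists_clopenPartition_refining_preimage (hf : Continuous f)
    (hZ : Ultraparacompact Z) {𝒱 : Set (Set Z)} (h𝒱 : ∀ V ∈ 𝒱, IsOpen V)
    (h𝒱_cover : ⋃₀ 𝒱 = univ) :
    ∃ P : Set (Set Y), IsClopenPartition Y P ∧ ∀ S ∈ P, ∃ V ∈ 𝒱, S ⊆ f ⁻¹' V := by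
  obtain ⟨P, hP, hrefine⟩ := hZ 𝒱 h𝒱 h𝒱_cover
  refine ⟨_, hP.preimage hf, ?_⟩
  rintro _ ⟨⟨S, hS, rfl⟩, -⟩
  obtain ⟨V, hV, hSV⟩ := hrefine S hS
  exact ⟨V, hV, preimage_mono hSV⟩

theorem Topology.IsInducing.ultraparacompact_of_forall_isOpen (hf : IsInducing f)
    (h : ∀ W : Set Z, IsOpen W → range f ⊆ W → Ultraparacompact W) : Ultraparacompact Y := by
  intro 𝒰 h𝒰 h𝒰_cover
  choose! V hV_open hV using fun U hU => hf.isOpen_iff.mp (h𝒰 U hU)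
  set W := ⋃ U ∈ 𝒰, V U
  have hrange : range f ⊆ W := by
    rintro _ ⟨y, rfl⟩
    obtain ⟨U, hU, hyU⟩ := mem_sUnion.mp (h𝒰_cover ▸ mem_univ y : y ∈ ⋃₀ 𝒰)
    rw [← hV U hU] at hyU
    exact mem_biUnion hU hyU
  have hW_cover : ⋃₀ ((fun U => ((↑) : W → Z) ⁻¹' V U) '' 𝒰) = univ := by
    refine eq_univ_of_forall fun ⟨z, hz⟩ => ?_
    obtain ⟨U, hU, hzU⟩ := mem_iUnion₂.mp hz
    exact ⟨_, mem_image_of_mem _ hU, hzU⟩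
  obtain ⟨P, hP, hrefine⟩ :=
    (h W (isOpen_biUnion hV_open) hrange).exists_clopenPartition_refining_preimage
      (hf.continuous.codRestrict fun y => hrange (mem_range_self y))
      (forall_mem_image.mpr fun U hU => (hV_open U hU).preimage continuous_subtype_val)
      hW_cover
  refine ⟨P, hP, fun S hS => ?_⟩
  obtain ⟨_, ⟨U, hU, rfl⟩, hSU⟩ := hrefine S hS
  exact ⟨U, hU, hV U hU ▸ hSU⟩

end

theorem ultraparacompact_subspaces_general (X : Type*) [TopologicalSpace X]
    (h : ∀ U : Set X, IsOpen U → Ultraparacompact U) :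
    ∀ A : Set X, Ultraparacompact A :=
  fun _ => Topology.IsInducing.subtypeVal.ultraparacompact_of_forall_isOpen fun W hW _ => h W hW

/-- If every open subspace of a Hausdorff space `X` is ultraparacompact,
then every subspace of `X` is ultraparacompact. -/
theorem ultraparacompact_subspaces (X : Type*) [TopologicalSpace X] [T2Space X]
    (h : ∀ U : Set X, IsOpen U → Ultraparacompact U) :
    ∀ A : Set X, Ultraparacompact A :=
  ultraparacompact_subspaces_general X h
end

section
/- Let X be an ultranormal Hausdorff space and let (U_α)_{α ∈ A} be a point-finite open cover of X. Then there is a cover (V_α)_{α ∈ A} of X by clopen sets such that V_α ⊆ U_α for each α ∈ A and V_α ≠ ∅ whenever U_α ≠ ∅. -/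
/-- In an ultranormal Hausdorff space, every point-finite open cover `(U a)` admits a
clopen cover `(V a)` with `V a ⊆ U a`, and `V a` nonempty whenever `U a` is. -/
theorem ultranormal_pointFinite_shrinking (X : Type*) [TopologicalSpace X] [T2Space X]
    (hX : Ultranormal X) {A : Type*} (U : A → Set X)
    (hopen : ∀ a, IsOpen (U a)) (hcover : ⋃ a, U a = Set.univ)
    (hpf : ∀ x : X, {a : A | x ∈ U a}.Finite) :
    ∃ V : A → Set X, (∀ a, IsClopen (V a)) ∧ (⋃ a, V a = Set.univ) ∧
      (∀ a, V a ⊆ U a) ∧ (∀ a, (U a).Nonempty → (V a).Nonempty) := by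
  classical
  -- ultranormal implies normal
  have hnorm : NormalSpace X := by
    constructor
    intro R S hR hS hdisj
    obtain ⟨C, hC, hRC, hSC⟩ := hX R S hR hS hdisj
    exact ⟨C, Cᶜ, hC.isOpen, hC.compl.isOpen, hRC,
      fun x hx => by simpa using fun hxC => Set.eq_empty_iff_forall_notMem.1 hSC x ⟨hx, hxC⟩,
      disjoint_compl_right⟩
  obtain ⟨v, hvU, hvo, hvcl⟩ := exists_iUnion_eq_closure_subset hopen hpf hcover
  -- separate closure (v a) from (U a)ᶜ by a clopen set
  have key : ∀ a, ∃ C : Set X, IsClopen C ∧ v a ⊆ C ∧ C ⊆ U a := by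
    intro a
    obtain ⟨C, hC, hsub, hdis⟩ := hX (closure (v a)) (U a)ᶜ isClosed_closure
      (hopen a).isClosed_compl (Set.disjoint_compl_right_iff_subset.2 (hvcl a))
    refine ⟨C, hC, subset_closure.trans hsub, fun x hx => by_contra fun hxU => ?_⟩
    exact Set.eq_empty_iff_forall_notMem.1 hdis x ⟨hxU, hx⟩
  choose W hWclopen hWv hWU using key
  -- nonempty clopen piece inside each nonempty U a
  have key2 : ∀ a, (U a).Nonempty → ∃ D : Set X, IsClopen D ∧ D.Nonempty ∧ D ⊆ U a := by
    intro a ⟨x, hx⟩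
    obtain ⟨C, hC, hsub, hdis⟩ := hX {x} (U a)ᶜ isClosed_singleton
      (hopen a).isClosed_compl (Set.disjoint_compl_right_iff_subset.2 (by simpa))
    refine ⟨C, hC, ⟨x, hsub rfl⟩, fun y hy => by_contra fun hyU => ?_⟩
    exact Set.eq_empty_iff_forall_notMem.1 hdis y ⟨hyU, hy⟩
  set D : A → Set X := fun a =>
    if h : (U a).Nonempty then (key2 a h).choose else ∅ with hD
  have hDclopen : ∀ a, IsClopen (D a) := by
    intro a; rw [hD]; dsimp only
    split
    · exact (key2 a ‹_›).choose_spec.1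
    · exact isClopen_empty
  have hDU : ∀ a, D a ⊆ U a := by
    intro a; rw [hD]; dsimp only
    split
    · exact (key2 a ‹_›).choose_spec.2.2
    · exact Set.empty_subset _
  refine ⟨fun a => W a ∪ D a, fun a => (hWclopen a).union (hDclopen a), ?_,
    fun a => Set.union_subset (hWU a) (hDU a), ?_⟩
  · rw [Set.eq_univ_iff_forall]
    intro x
    have : x ∈ ⋃ a, v a := hvU ▸ Set.mem_univ x
    obtain ⟨a, ha⟩ := Set.mem_iUnion.1 this
    exact Set.mem_iUnion.2 ⟨a, Or.inl (hWv a ha)⟩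
  · intro a ha
    have : (D a).Nonempty := by
      rw [hD]; dsimp only; rw [dif_pos ha]
      exact (key2 a ha).choose_spec.2.1
    exact this.mono Set.subset_union_right
end

section
/- Let X be an ultranormal Hausdorff space and let (U_α)_{α ∈ A} be a locally finite open cover of X. Then there is a family (P_α)_{α ∈ A} of clopen sets covering X such that P_α ⊆ U_α for each α ∈ A and P_α ∩ P_β = ∅ whenever α ≠ β. -/
/-!
Shrink the locally finite cover to a closed cover `V a ⊆ U a` (an ultranormal space is normal),
separate each `V a` from `(U a)ᶜ` by a clopen set `C a`, and make the resulting locally finite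
clopen cover disjoint along a well-order of the index set: `P a = C a \ ⋃ b < a, C b`. Local
finiteness is what keeps the union `⋃ b < a, C b` closed, hence `P a` clopen.
-/

open Set Function

theorem iUnion_diff_biUnion_lt {α ι : Type*} [LinearOrder ι] [WellFoundedLT ι]
    (s : ι → Set α) :
    ⋃ i, (s i \ ⋃ j < i, s j) = ⋃ i, s i := by
  refine Subset.antisymm (iUnion_mono fun i => sdiff_subset) fun x hx => ?_
  obtain ⟨i, hxi, hmin⟩ := wellFounded_lt.has_min {i | x ∈ s i} (mem_iUnion.1 hx)
  exact mem_iUnion.2 ⟨i, hxi, fun hlt =>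
    let ⟨j, hji, hxj⟩ := mem_iUnion₂.1 hlt
    hmin j hxj hji⟩

theorem pairwise_disjoint_diff_biUnion_lt {α ι : Type*} [LinearOrder ι] (s : ι → Set α) :
    Pairwise (Disjoint on fun i => s i \ ⋃ j < i, s j) := by
  have key : ∀ {i j : ι}, i < j → Disjoint (s i \ ⋃ k < i, s k) (s j \ ⋃ k < j, s k) :=
    fun hij => disjoint_of_subset_left sdiff_subset <|
      disjoint_sdiff_right.mono_left (subset_biUnion_of_mem (u := s) hij)
  intro i j hij
  rcases hij.lt_or_gt with h | h
  exacts [key h, (key h).symm]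

section

variable {X ι : Type*} [TopologicalSpace X]

theorem LocallyFinite.isClopen_biUnion {s : ι → Set X} (hf : LocallyFinite s)
    (hs : ∀ i, IsClopen (s i)) (t : Set ι) : IsClopen (⋃ i ∈ t, s i) := by
  refine ⟨?_, isOpen_biUnion fun i _ => (hs i).isOpen⟩
  rw [biUnion_eq_iUnion]
  exact (hf.comp_injective Subtype.val_injective).isClosed_iUnion fun i => (hs i).isClosed

theorem LocallyFinite.exists_pairwise_disjoint_isClopen_subset {C : ι → Set X}
    (hf : LocallyFinite C) (hC : ∀ i, IsClopen (C i)) :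
    ∃ P : ι → Set X, (∀ i, IsClopen (P i)) ∧ ⋃ i, P i = ⋃ i, C i ∧ (∀ i, P i ⊆ C i) ∧
      Pairwise (Disjoint on P) := by
  obtain ⟨_, _⟩ := exists_wellFoundedLT ι
  exact ⟨fun i => C i \ ⋃ j < i, C j, fun i => (hC i).diff (hf.isClopen_biUnion hC (Iio i)),
    iUnion_diff_biUnion_lt C, fun i => sdiff_subset, pairwise_disjoint_diff_biUnion_lt C⟩

theorem Ultranormal.exists_isClopen_between (hX : Ultranormal X) {s u : Set X}
    (hs : IsClosed s) (hu : IsOpen u) (hsu : s ⊆ u) : ∃ C, IsClopen C ∧ s ⊆ C ∧ C ⊆ u := by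
  obtain ⟨C, hC, hsC, huC⟩ :=
    hX s uᶜ hs hu.isClosed_compl (disjoint_compl_right_iff_subset.2 hsu)
  refine ⟨C, hC, hsC, fun x hxC => by_contra fun hxu => ?_⟩
  exact (eq_empty_iff_forall_notMem.1 huC) x ⟨hxu, hxC⟩

theorem Ultranormal.normalSpace (hX : Ultranormal X) : NormalSpace X where
  normal s t hs ht hst := by
    obtain ⟨C, hC, hsC, hCt⟩ :=
      hX.exists_isClopen_between hs ht.isOpen_compl (subset_compl_iff_disjoint_right.2 hst)
    exact ⟨C, Cᶜ, hC.isOpen, hC.compl.isOpen, hsC, subset_compl_comm.1 hCt,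
      disjoint_compl_right⟩

end

theorem ultranormal_locallyFinite_disjoint_shrinking_general (X : Type*) [TopologicalSpace X]
    (hX : Ultranormal X) {A : Type*} (U : A → Set X)
    (hopen : ∀ a, IsOpen (U a)) (hcover : ⋃ a, U a = Set.univ)
    (hlf : LocallyFinite U) :
    ∃ P : A → Set X, (∀ a, IsClopen (P a)) ∧ (⋃ a, P a = Set.univ) ∧
      (∀ a, P a ⊆ U a) ∧ (∀ a b, a ≠ b → P a ∩ P b = ∅) := by
  have := hX.normalSpace
  obtain ⟨V, hVcover, hVclosed, hVU⟩ :=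
    exists_iUnion_eq_closed_subset hopen hlf.point_finite hcover
  choose C hCclopen hVC hCU using
    fun a => hX.exists_isClopen_between (hVclosed a) (hopen a) (hVU a)
  have hCcover : ⋃ a, C a = univ := eq_univ_of_univ_subset (hVcover ▸ iUnion_mono hVC)
  obtain ⟨P, hPclopen, hPcover, hPC, hPdisj⟩ :=
    (hlf.subset hCU).exists_pairwise_disjoint_isClopen_subset hCclopen
  exact ⟨P, hPclopen, hPcover.trans hCcover, fun a => (hPC a).trans (hCU a),
    fun a b hab => disjoint_iff_inter_eq_empty.1 (hPdisj hab)⟩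

/-- In an ultranormal Hausdorff space, every locally finite open cover `(U a)` admits a
cover `(P a)` by pairwise disjoint clopen sets with `P a ⊆ U a` for each `a`. -/
theorem ultranormal_locallyFinite_disjoint_shrinking (X : Type*) [TopologicalSpace X]
    [T2Space X] (hX : Ultranormal X) {A : Type*} (U : A → Set X)
    (hopen : ∀ a, IsOpen (U a)) (hcover : ⋃ a, U a = Set.univ)
    (hlf : LocallyFinite U) :
    ∃ P : A → Set X, (∀ a, IsClopen (P a)) ∧ (⋃ a, P a = Set.univ) ∧
      (∀ a, P a ⊆ U a) ∧ (∀ a b, a ≠ b → P a ∩ P b = ∅) :=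
  ultranormal_locallyFinite_disjoint_shrinking_general X hX U hopen hcover hlf
end

section
/- A Hausdorff space X is ultraparacompact if and only if X is zero-dimensional and satisfies the following property: for every ideal I on the Boolean algebra 𝔅(X) of clopen subsets of X such that the union of the members of I equals X and such that for every partition P of X into clopen sets the union ⋃(P ∩ I) belongs to I, one has I = 𝔅(X). -/
/-- An ideal on the Boolean algebra `𝔅(X)` of clopen subsets of `X`: a nonempty
family of clopen sets, downward closed (among clopen sets) and closed under finite unions. -/
def ClopenIdeal {X : Type*} [TopologicalSpace X] (I : Set (Set X)) : Prop :=
  I.Nonempty ∧ (∀ S ∈ I, IsClopen S) ∧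
    (∀ S ∈ I, ∀ T : Set X, IsClopen T → T ⊆ S → T ∈ I) ∧
    (∀ S ∈ I, ∀ T ∈ I, S ∪ T ∈ I)

section Aux

variable {X : Type*} [TopologicalSpace X]

/-- The key ideal associated to an open cover `𝒰`: clopen sets `S` such that there is a
clopen partition of `X` each of whose pieces lies in some `U ∈ 𝒰` or in `Sᶜ`. -/
def coverIdeal (𝒰 : Set (Set X)) : Set (Set X) :=
  {S | IsClopen S ∧ ∃ Q : Set (Set X), IsClopenPartition X Q ∧
    ∀ T ∈ Q, (∃ U ∈ 𝒰, T ⊆ U) ∨ T ⊆ Sᶜ}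

lemma coverIdeal_empty_mem (𝒰 : Set (Set X)) : (∅ : Set X) ∈ coverIdeal 𝒰 := by
  by_cases hX : (Set.univ : Set X).Nonempty
  · refine ⟨isClopen_empty, {Set.univ}, ⟨?_, ?_, ?_, ?_⟩, ?_⟩
    · rintro S rfl; exact isClopen_univ
    · rintro S rfl; exact hX
    · rintro S rfl T rfl h; exact absurd rfl h
    · simp
    · rintro T rfl; exact Or.inr (by simp)
  · refine ⟨isClopen_empty, ∅, ⟨?_, ?_, ?_, ?_⟩, ?_⟩
    · rintro S hS; exact absurd hS (Set.notMem_empty S)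
    · rintro S hS; exact absurd hS (Set.notMem_empty S)
    · rintro S hS; exact absurd hS (Set.notMem_empty S)
    · rw [Set.sUnion_empty]
      exact (Set.not_nonempty_iff_eq_empty.mp hX).symm
    · rintro T hT; exact absurd hT (Set.notMem_empty T)

lemma coverIdeal_isIdeal (𝒰 : Set (Set X)) : ClopenIdeal (coverIdeal 𝒰) := by
  refine ⟨⟨∅, coverIdeal_empty_mem 𝒰⟩, fun S hS => hS.1, ?_, ?_⟩
  · -- downward closed
    rintro S ⟨hSc, Q, hQ, hQs⟩ T hTc hTS
    refine ⟨hTc, Q, hQ, fun A hA => (hQs A hA).imp id fun h => h.trans ?_⟩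
    exact Set.compl_subset_compl.mpr hTS
  · -- closed under unions
    rintro S ⟨hSc, Q, hQ, hQs⟩ T ⟨hTc, R, hR, hRs⟩
    refine ⟨hSc.union hTc, {A | A.Nonempty ∧ ∃ B ∈ Q, ∃ C ∈ R, A = B ∩ C},
      ⟨?_, ?_, ?_, ?_⟩, ?_⟩
    · rintro A ⟨-, B, hB, C, hC, rfl⟩
      exact (hQ.1 B hB).inter (hR.1 C hC)
    · rintro A ⟨hA, -⟩; exact hA
    · rintro A ⟨-, B, hB, C, hC, rfl⟩ A' ⟨-, B', hB', C', hC', rfl⟩ hne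
      by_contra h
      obtain ⟨x, hx⟩ := Set.nonempty_iff_ne_empty.mpr h
      have hBB : B = B' := by
        by_contra hBB
        have hx2 : x ∈ B ∩ B' := ⟨hx.1.1, hx.2.1⟩
        rw [hQ.2.2.1 B hB B' hB' hBB] at hx2
        exact hx2
      have hCC : C = C' := by
        by_contra hCC
        have hx2 : x ∈ C ∩ C' := ⟨hx.1.2, hx.2.2⟩
        rw [hR.2.2.1 C hC C' hC' hCC] at hx2
        exact hx2
      exact hne (by rw [hBB, hCC])
    · ext x
      simp only [Set.mem_sUnion, Set.mem_univ, iff_true]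
      obtain ⟨B, hB, hxB⟩ : ∃ B ∈ Q, x ∈ B := by
        have := hQ.2.2.2
        rw [Set.sUnion_eq_univ_iff] at this; exact this x
      obtain ⟨C, hC, hxC⟩ : ∃ C ∈ R, x ∈ C := by
        have := hR.2.2.2
        rw [Set.sUnion_eq_univ_iff] at this; exact this x
      exact ⟨B ∩ C, ⟨⟨x, hxB, hxC⟩, B, hB, C, hC, rfl⟩, hxB, hxC⟩
    · rintro A ⟨-, B, hB, C, hC, rfl⟩
      rcases hQs B hB with ⟨U, hU, h⟩ | h
      · exact Or.inl ⟨U, hU, Set.inter_subset_left.trans h⟩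
      · rcases hRs C hC with ⟨U, hU, h'⟩ | h'
        · exact Or.inl ⟨U, hU, Set.inter_subset_right.trans h'⟩
        · refine Or.inr ?_
          rw [Set.compl_union]
          exact Set.inter_subset_inter h h'

lemma coverIdeal_sUnion (𝒰 : Set (Set X)) (hzd : ZeroDimensional X)
    (h𝒰open : ∀ U ∈ 𝒰, IsOpen U) (h𝒰cov : ⋃₀ 𝒰 = Set.univ) :
    ⋃₀ coverIdeal 𝒰 = Set.univ := by
  ext x
  simp only [Set.mem_sUnion, Set.mem_univ, iff_true]
  obtain ⟨U, hU, hxU⟩ : ∃ U ∈ 𝒰, x ∈ U := by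
    rw [Set.sUnion_eq_univ_iff] at h𝒰cov; exact h𝒰cov x
  obtain ⟨C, hCc, hxC, hCU⟩ := hzd.exists_subset_of_mem_open hxU (h𝒰open U hU)
  refine ⟨C, ⟨hCc, {A | (A = C ∨ A = Cᶜ) ∧ A.Nonempty}, ⟨?_, ?_, ?_, ?_⟩, ?_⟩, hxC⟩
  · rintro A ⟨(rfl | rfl), -⟩
    exacts [hCc, hCc.compl]
  · rintro A ⟨-, hA⟩; exact hA
  · rintro A ⟨(rfl | rfl), -⟩ B ⟨(rfl | rfl), -⟩ hne <;>
      first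
        | exact absurd rfl hne
        | exact Set.inter_compl_self _
        | exact Set.compl_inter_self _
  · ext y
    simp only [Set.mem_sUnion, Set.mem_univ, iff_true]
    by_cases h : y ∈ C
    · exact ⟨C, ⟨Or.inl rfl, ⟨x, hxC⟩⟩, h⟩
    · exact ⟨Cᶜ, ⟨Or.inr rfl, ⟨y, h⟩⟩, h⟩
  · rintro A ⟨(rfl | rfl), -⟩
    · exact Or.inl ⟨U, hU, hCU⟩
    · exact Or.inr le_rfl

lemma coverIdeal_partition (𝒰 : Set (Set X)) (P : Set (Set X)) (hP : IsClopenPartition X P) :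
    ⋃₀ (P ∩ coverIdeal 𝒰) ∈ coverIdeal 𝒰 := by
  classical
  set I := coverIdeal 𝒰 with hI
  set W := ⋃₀ (P ∩ I) with hW
  -- choice of witnessing partitions
  set g : Set X → Set (Set X) := fun S => if h : S ∈ I then h.2.choose else ∅ with hgdef
  have hg : ∀ S, (hS : S ∈ I) → IsClopenPartition X (g S) ∧
      ∀ T ∈ g S, (∃ U ∈ 𝒰, T ⊆ U) ∨ T ⊆ Sᶜ := by
    intro S hS
    have : g S = hS.2.choose := dif_pos hS
    rw [this]
    exact hS.2.choose_spec
  have hPd : ∀ S ∈ P, ∀ T ∈ P, S ≠ T → S ∩ T = ∅ := hP.2.2.1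
  have hdisj : ∀ x : X, ∀ S ∈ P, ∀ T ∈ P, x ∈ S → x ∈ T → S = T := by
    intro x S hS T hT hxS hxT
    by_contra h
    have hx2 : x ∈ S ∩ T := ⟨hxS, hxT⟩
    rw [hPd S hS T hT h] at hx2
    exact hx2
  have hcompl : Wᶜ = ⋃₀ (P \ I) := by
    ext x
    simp only [Set.mem_compl_iff, Set.mem_sUnion, Set.mem_inter_iff, Set.mem_diff, hW]
    constructor
    · intro hx
      obtain ⟨S, hSP, hxS⟩ : ∃ S ∈ P, x ∈ S := by
        have := hP.2.2.2
        rw [Set.sUnion_eq_univ_iff] at this; exact this x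
      exact ⟨S, ⟨hSP, fun hSI => hx ⟨S, ⟨hSP, hSI⟩, hxS⟩⟩, hxS⟩
    · rintro ⟨S, ⟨hSP, hSI⟩, hxS⟩ ⟨S', ⟨hS'P, hS'I⟩, hxS'⟩
      exact hSI ((hdisj x S hSP S' hS'P hxS hxS') ▸ hS'I)
  have hWclopen : IsClopen W := by
    constructor
    · rw [← isOpen_compl_iff, hcompl]
      exact isOpen_sUnion fun S hS => (hP.1 S hS.1).isOpen
    · exact isOpen_sUnion fun S hS => (hP.1 S hS.1).isOpen
  refine ⟨hWclopen,
    {A | A.Nonempty ∧ ∃ S ∈ P ∩ I, ∃ T ∈ g S, A = T ∩ S} ∪ (P \ I), ⟨?_, ?_, ?_, ?_⟩, ?_⟩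
  · rintro A (⟨-, S, hS, T, hT, rfl⟩ | hA)
    · exact ((hg S hS.2).1.1 T hT).inter hS.2.1
    · exact hP.1 A hA.1
  · rintro A (⟨hA, -⟩ | hA)
    · exact hA
    · exact hP.2.1 A hA.1
  · rintro A (⟨-, S, hS, T, hT, rfl⟩ | hA) B (⟨-, S', hS', T', hT', rfl⟩ | hB) hne
    · -- both of refined type
      by_contra h
      obtain ⟨x, hx⟩ := Set.nonempty_iff_ne_empty.mpr h
      have hSS : S = S' := hdisj x S hS.1 S' hS'.1 hx.1.2 hx.2.2
      subst hSS
      have hTT : T = T' := by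
        by_contra hTT
        have hx2 : x ∈ T ∩ T' := ⟨hx.1.1, hx.2.1⟩
        rw [(hg S hS.2).1.2.2.1 T hT T' hT' hTT] at hx2
        exact hx2
      exact hne (by rw [hTT])
    · -- refined vs untouched
      have hSB : S ≠ B := fun h => hB.2 (h ▸ hS.2)
      have := hPd S hS.1 B hB.1 hSB
      apply Set.eq_empty_of_subset_empty
      rw [← this]
      exact Set.inter_subset_inter Set.inter_subset_right le_rfl
    · -- untouched vs refined
      have hSB : A ≠ S' := fun h => hA.2 (h ▸ hS'.2)
      have := hPd A hA.1 S' hS'.1 hSB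
      apply Set.eq_empty_of_subset_empty
      rw [← this]
      exact Set.inter_subset_inter le_rfl Set.inter_subset_right
    · exact hPd A hA.1 B hB.1 hne
  · ext x
    simp only [Set.mem_sUnion, Set.mem_univ, iff_true]
    obtain ⟨S, hSP, hxS⟩ : ∃ S ∈ P, x ∈ S := by
      have := hP.2.2.2
      rw [Set.sUnion_eq_univ_iff] at this; exact this x
    by_cases hSI : S ∈ I
    · obtain ⟨T, hT, hxT⟩ : ∃ T ∈ g S, x ∈ T := by
        have := (hg S hSI).1.2.2.2
        rw [Set.sUnion_eq_univ_iff] at this; exact this x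
      exact ⟨T ∩ S, Or.inl ⟨⟨x, hxT, hxS⟩, S, ⟨hSP, hSI⟩, T, hT, rfl⟩, hxT, hxS⟩
    · exact ⟨S, Or.inr ⟨hSP, hSI⟩, hxS⟩
  · rintro A (⟨hAne, S, hS, T, hT, rfl⟩ | hA)
    · rcases (hg S hS.2).2 T hT with ⟨U, hU, h⟩ | h
      · exact Or.inl ⟨U, hU, Set.inter_subset_left.trans h⟩
      · exfalso
        obtain ⟨x, hxT, hxS⟩ := hAne
        exact h hxT hxS
    · refine Or.inr fun x hxA => ?_
      intro hxW
      obtain ⟨S', ⟨hS'P, hS'I⟩, hxS'⟩ := hxW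
      exact hA.2 ((hdisj x A hA.1 S' hS'P hxA hxS') ▸ hS'I)

end Aux

/-- A Hausdorff space `X` is ultraparacompact iff `X` is zero-dimensional and every ideal
`I` on `𝔅(X)` whose union is all of `X` and such that `⋃ (P ∩ I) ∈ I` for every partition
`P` of `X` into clopen sets must be all of `𝔅(X)`. -/
theorem ultraparacompact_iff_clopen_ideal_property (X : Type*) [TopologicalSpace X]
    [T2Space X] :
    Ultraparacompact X ↔ ZeroDimensional X ∧
      ∀ I : Set (Set X), ClopenIdeal I → ⋃₀ I = Set.univ →
        (∀ P : Set (Set X), IsClopenPartition X P → ⋃₀ (P ∩ I) ∈ I) →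
        I = {S : Set X | IsClopen S} := by
  constructor
  · intro hU
    constructor
    · -- zero-dimensional
      apply TopologicalSpace.isTopologicalBasis_of_isOpen_of_nhds
      · exact fun s hs => hs.isOpen
      · intro x u hxu hu
        have hopen : ∀ U ∈ ({u, {x}ᶜ} : Set (Set X)), IsOpen U := by
          intro U hU'
          simp only [Set.mem_insert_iff, Set.mem_singleton_iff] at hU'
          rcases hU' with rfl | rfl
          · exact hu
          · exact isOpen_compl_singleton
        have hcov : ⋃₀ ({u, {x}ᶜ} : Set (Set X)) = Set.univ := by
          ext y
          simp only [Set.sUnion_insert, Set.sUnion_singleton, Set.mem_union,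
            Set.mem_compl_iff, Set.mem_singleton_iff, Set.mem_univ, iff_true]
          by_cases h : y = x
          · exact Or.inl (h ▸ hxu)
          · exact Or.inr h
        obtain ⟨P, hP, href⟩ := hU {u, {x}ᶜ} hopen hcov
        obtain ⟨S, hSP, hxS⟩ : ∃ S ∈ P, x ∈ S := by
          have := hP.2.2.2
          rw [Set.sUnion_eq_univ_iff] at this; exact this x
        refine ⟨S, hP.1 S hSP, hxS, ?_⟩
        obtain ⟨U, hU', hSU⟩ := href S hSP
        simp only [Set.mem_insert_iff, Set.mem_singleton_iff] at hU'
        rcases hU' with rfl | rfl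
        · exact hSU
        · exact absurd (hSU hxS) (by simp)
    · -- ideal property
      intro I hI hIu hIP
      obtain ⟨P, hP, href⟩ := hU I (fun S hS => (hI.2.1 S hS).isOpen) hIu
      have hPI : P ∩ I = P := by
        apply Set.inter_eq_left.mpr
        intro S hSP
        obtain ⟨U, hUI, hSU⟩ := href S hSP
        exact hI.2.2.1 U hUI S (hP.1 S hSP) hSU
      have huniv : Set.univ ∈ I := by
        have := hIP P hP
        rwa [hPI, hP.2.2.2] at this
      ext S
      simp only [Set.mem_setOf_eq]
      exact ⟨hI.2.1 S, fun hS => hI.2.2.1 _ huniv S hS (Set.subset_univ S)⟩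
  · rintro ⟨hzd, hid⟩ 𝒰 h𝒰open h𝒰cov
    have hIeq := hid (coverIdeal 𝒰) (coverIdeal_isIdeal 𝒰)
      (coverIdeal_sUnion 𝒰 hzd h𝒰open h𝒰cov) (coverIdeal_partition 𝒰)
    have huniv : Set.univ ∈ coverIdeal 𝒰 := by
      rw [hIeq]; exact isClopen_univ
    obtain ⟨-, Q, hQ, hQs⟩ := huniv
    refine ⟨Q, hQ, fun S hS => ?_⟩
    rcases hQs S hS with h | h
    · exact h
    · exfalso
      obtain ⟨x, hx⟩ := hQ.2.1 S hS
      exact h hx (Set.mem_univ x)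
end

section
/- Every ultrametric space is ultraparacompact: if (X,d) is a metric space whose metric satisfies the strong triangle inequality d(x,z) ≤ max(d(x,y), d(y,z)) for all x, y, z, then every open cover of X has a refinement that is a partition of X into clopen sets. -/
/-!
Cover `X` by balls of radius `2⁻¹ ^ n`, choosing at each point the least `n` for which the
ball lies in a member of the cover. In an ultrametric space every point of a ball is a
centre of it, so two points in the same chosen ball have the same least `n` and hence the
same chosen ball; distinct chosen balls are therefore disjoint, and balls are clopen.
-/

open Metric

section

variable {X : Type*} [PseudoMetricSpace X]

lemma exists_ball_inv_two_pow_subset_of_mem_sUnion {𝒰 : Set (Set X)}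
    (hopen : ∀ U ∈ 𝒰, IsOpen U) {x : X} (hx : x ∈ ⋃₀ 𝒰) :
    ∃ n : ℕ, ∃ U ∈ 𝒰, ball x ((2 : ℝ)⁻¹ ^ n) ⊆ U := by
  obtain ⟨U, hU, hxU⟩ := hx
  obtain ⟨ε, hε, hball⟩ := isOpen_iff.mp (hopen U hU) x hxU
  obtain ⟨n, hn⟩ := exists_pow_lt_of_lt_one hε (by norm_num : (2 : ℝ)⁻¹ < 1)
  exact ⟨n, U, hU, (ball_subset_ball hn.le).trans hball⟩

/-- Junk value `0` (from `sInf ∅`) when no ball around `x` lies in a member of `𝒰`. -/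
noncomputable def coverLevel (𝒰 : Set (Set X)) (x : X) : ℕ :=
  sInf {n | ∃ U ∈ 𝒰, ball x ((2 : ℝ)⁻¹ ^ n) ⊆ U}

lemma exists_ball_coverLevel_subset {𝒰 : Set (Set X)} (hopen : ∀ U ∈ 𝒰, IsOpen U)
    {x : X} (hx : x ∈ ⋃₀ 𝒰) : ∃ U ∈ 𝒰, ball x ((2 : ℝ)⁻¹ ^ coverLevel 𝒰 x) ⊆ U :=
  Nat.sInf_mem (exists_ball_inv_two_pow_subset_of_mem_sUnion hopen hx)

namespace IsUltrametricDist

variable [IsUltrametricDist X]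

lemma isClopenPartition_range_ball {r : X → ℝ} (hr : ∀ x, 0 < r x)
    (hball : ∀ x y, y ∈ ball x (r x) → ball y (r y) = ball x (r x)) :
    IsClopenPartition X (Set.range fun x => ball x (r x)) := by
  refine ⟨?_, ?_, ?_, ?_⟩
  · rintro _ ⟨x, rfl⟩
    exact isClopen_ball x (r x)
  · rintro _ ⟨x, rfl⟩
    exact ⟨x, mem_ball_self (hr x)⟩
  · rintro _ ⟨x, rfl⟩ _ ⟨y, rfl⟩ hne
    refine Set.eq_empty_of_forall_notMem fun z ⟨hxz, hyz⟩ => hne ?_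
    exact (hball x z hxz).symm.trans (hball y z hyz)
  · exact Set.eq_univ_of_forall fun x => ⟨_, ⟨x, rfl⟩, mem_ball_self (hr x)⟩

section OpenCover

variable {𝒰 : Set (Set X)} (hopen : ∀ U ∈ 𝒰, IsOpen U) (hcover : ⋃₀ 𝒰 = Set.univ)
include hopen hcover

lemma coverLevel_le_of_mem_ball {x y : X} (hy : y ∈ ball x ((2 : ℝ)⁻¹ ^ coverLevel 𝒰 x)) :
    coverLevel 𝒰 y ≤ coverLevel 𝒰 x := by
  obtain ⟨U, hU, hsub⟩ := exists_ball_coverLevel_subset hopen (hcover ▸ Set.mem_univ x)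
  exact Nat.sInf_le ⟨U, hU, ball_eq_of_mem hy ▸ hsub⟩

lemma ball_coverLevel_eq_of_mem {x y : X} (hy : y ∈ ball x ((2 : ℝ)⁻¹ ^ coverLevel 𝒰 x)) :
    ball y ((2 : ℝ)⁻¹ ^ coverLevel 𝒰 y) = ball x ((2 : ℝ)⁻¹ ^ coverLevel 𝒰 x) := by
  have hyx : coverLevel 𝒰 y ≤ coverLevel 𝒰 x := coverLevel_le_of_mem_ball hopen hcover hy
  have hx : x ∈ ball y ((2 : ℝ)⁻¹ ^ coverLevel 𝒰 y) :=
    ball_subset_ball (pow_le_pow_of_le_one (by norm_num) (by norm_num) hyx) (mem_ball_comm.mp hy)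
  have hxy : coverLevel 𝒰 x ≤ coverLevel 𝒰 y := coverLevel_le_of_mem_ball hopen hcover hx
  rw [le_antisymm hyx hxy, ball_eq_of_mem hy]

end OpenCover

theorem ultraparacompact : Ultraparacompact X := by
  intro 𝒰 hopen hcover
  refine ⟨_, isClopenPartition_range_ball (r := fun x => (2 : ℝ)⁻¹ ^ coverLevel 𝒰 x)
    (fun _ => by positivity) (fun _ _ => ball_coverLevel_eq_of_mem hopen hcover), ?_⟩
  rintro _ ⟨x, rfl⟩
  exact exists_ball_coverLevel_subset hopen (hcover ▸ Set.mem_univ x)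

end IsUltrametricDist

end

/-- Every ultrametric space (a metric space whose metric satisfies the strong triangle
inequality) is ultraparacompact. -/
theorem ultrametric_ultraparacompact (X : Type*) [MetricSpace X]
    (hultra : ∀ x y z : X, dist x z ≤ max (dist x y) (dist y z)) :
    Ultraparacompact X :=
  have : IsUltrametricDist X := ⟨hultra⟩
  IsUltrametricDist.ultraparacompact
end

section
/- Let X be an ultraparacompact Hausdorff space and let Y be a compact zero-dimensional Hausdorff space. Then the product space X × Y is ultraparacompact. -/
/-!
For a fixed `x`, compactness of `Y` and its clopen basis yield an open neighbourhood `W` of `x`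
and a finite clopen partition of `Y` whose pieces `R` all have `W ×ˢ R` inside a member of the
cover. Ultraparacompactness of `X` partitions `X` into clopen sets `S`, each inside such a `W`;
the boxes `S ×ˢ R` then form the required clopen partition of `X × Y`.
-/

open Set

section

variable {X Y : Type*} [TopologicalSpace X] [TopologicalSpace Y]

theorem IsClopenPartition.exists_mem {P : Set (Set X)} (hP : IsClopenPartition X P) (a : X) :
    ∃ S ∈ P, a ∈ S :=
  mem_sUnion.1 (hP.2.2.2 ▸ mem_univ a)

theorem IsClopenPartition.eq_of_mem_of_mem {P : Set (Set X)} (hP : IsClopenPartition X P)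
    {S T : Set X} (hS : S ∈ P) (hT : T ∈ P) {a : X} (haS : a ∈ S) (haT : a ∈ T) : S = T := by
  by_contra hST
  exact (hP.2.2.1 S hS T hT hST).subset ⟨haS, haT⟩

theorem isClopenPartition_range_preimage {D : Type*} [TopologicalSpace D] [DiscreteTopology D]
    {f : X → D} (hf : Continuous f) : IsClopenPartition X (range fun a => f ⁻¹' {f a}) := by
  refine ⟨?_, ?_, ?_, ?_⟩
  · rintro _ ⟨a, rfl⟩
    exact (isClopen_discrete _).preimage hf
  · rintro _ ⟨a, rfl⟩
    exact ⟨a, rfl⟩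
  · rintro _ ⟨a, rfl⟩ _ ⟨b, rfl⟩ hab
    refine eq_empty_of_forall_notMem fun c ⟨hca, hcb⟩ => hab ?_
    rw [mem_preimage, mem_singleton_iff] at hca hcb
    simp only [← hca, ← hcb]
  · exact eq_univ_of_forall fun a => ⟨_, ⟨a, rfl⟩, rfl⟩

theorem exists_isClopenPartition_subset_of_finset_cover {ι : Type*} {B : ι → Set X}
    (t : Finset ι) (hB : ∀ i ∈ t, IsClopen (B i)) (hcov : univ ⊆ ⋃ i ∈ t, B i) :
    ∃ Q, IsClopenPartition X Q ∧ ∀ R ∈ Q, ∃ i ∈ t, R ⊆ B i := by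
  -- the pieces are the atoms of the finite Boolean algebra generated by the `B i`
  let φ : X → t → Bool := fun a i => (B i).boolIndicator a
  have hφ : Continuous φ :=
    continuous_pi fun i => (continuous_boolIndicator_iff_isClopen _).2 (hB i i.2)
  refine ⟨_, isClopenPartition_range_preimage hφ, ?_⟩
  rintro _ ⟨a, rfl⟩
  obtain ⟨i, hi, hai⟩ := mem_iUnion₂.1 (hcov (mem_univ a))
  refine ⟨i, hi, fun b hb => ?_⟩
  have hφi : (B i).boolIndicator b = (B i).boolIndicator a := congr_fun hb ⟨i, hi⟩
  rw [mem_iff_boolIndicator, hφi, ← mem_iff_boolIndicator]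
  exact hai

theorem IsClopenPartition.prod {P : Set (Set X)} (hP : IsClopenPartition X P)
    {Q : Set X → Set (Set Y)} (hQ : ∀ S ∈ P, IsClopenPartition Y (Q S)) :
    IsClopenPartition (X × Y) {T | ∃ S ∈ P, ∃ R ∈ Q S, T = S ×ˢ R} := by
  refine ⟨?_, ?_, ?_, ?_⟩
  · rintro _ ⟨S, hS, R, hR, rfl⟩
    exact (hP.1 S hS).prod ((hQ S hS).1 R hR)
  · rintro _ ⟨S, hS, R, hR, rfl⟩
    exact (hP.2.1 S hS).prod ((hQ S hS).2.1 R hR)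
  · rintro _ ⟨S, hS, R, hR, rfl⟩ _ ⟨S', hS', R', hR', rfl⟩ hne
    refine eq_empty_of_forall_notMem fun ⟨a, b⟩ ⟨⟨haS, hbR⟩, haS', hbR'⟩ => hne ?_
    obtain rfl := hP.eq_of_mem_of_mem hS hS' haS haS'
    rw [(hQ S hS).eq_of_mem_of_mem hR hR' hbR hbR']
  · refine eq_univ_of_forall fun ⟨a, b⟩ => ?_
    obtain ⟨S, hS, haS⟩ := hP.exists_mem a
    obtain ⟨R, hR, hbR⟩ := (hQ S hS).exists_mem b
    exact ⟨S ×ˢ R, ⟨S, hS, R, hR, rfl⟩, haS, hbR⟩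

theorem ZeroDimensional.exists_isOpen_isClopen_prod_subset (hY : ZeroDimensional Y)
    {U : Set (X × Y)} (hU : IsOpen U) {x : X} {y : Y} (hxy : (x, y) ∈ U) :
    ∃ u : Set X, IsOpen u ∧ x ∈ u ∧ ∃ B : Set Y, IsClopen B ∧ y ∈ B ∧ u ×ˢ B ⊆ U := by
  obtain ⟨u, v, hu, hv, hxu, hyv, huv⟩ := isOpen_prod_iff.1 hU x y hxy
  obtain ⟨B, hB, hyB, hBv⟩ := hY.exists_subset_of_mem_open hyv hv
  exact ⟨u, hu, hxu, B, hB, hyB, (prod_mono subset_rfl hBv).trans huv⟩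

theorem exists_isOpen_isClopenPartition_prod_subset [CompactSpace Y] (hY : ZeroDimensional Y)
    {𝒰 : Set (Set (X × Y))} (h𝒰 : ∀ U ∈ 𝒰, IsOpen U) (hcov : ⋃₀ 𝒰 = univ) (x : X) :
    ∃ W, IsOpen W ∧ x ∈ W ∧
      ∃ Q, IsClopenPartition Y Q ∧ ∀ R ∈ Q, ∃ U ∈ 𝒰, W ×ˢ R ⊆ U := by
  have hbox : ∀ y : Y, ∃ u : Set X, IsOpen u ∧ x ∈ u ∧
      ∃ B : Set Y, IsClopen B ∧ y ∈ B ∧ ∃ U ∈ 𝒰, u ×ˢ B ⊆ U := fun y => by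
    obtain ⟨U, hU, hxy⟩ := mem_sUnion.1 (hcov ▸ mem_univ (x, y))
    obtain ⟨u, hu, hxu, B, hB, hyB, huB⟩ := hY.exists_isOpen_isClopen_prod_subset (h𝒰 U hU) hxy
    exact ⟨u, hu, hxu, B, hB, hyB, U, hU, huB⟩
  choose u hu hxu B hB hyB U hU huB using hbox
  obtain ⟨t, ht⟩ := isCompact_univ.elim_finite_subcover B (fun y => (hB y).isOpen)
    fun y _ => mem_iUnion.2 ⟨y, hyB y⟩
  obtain ⟨Q, hQ, hQB⟩ := exists_isClopenPartition_subset_of_finset_cover t (fun y _ => hB y) ht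
  refine ⟨⋂ y ∈ t, u y, isOpen_biInter_finset fun y _ => hu y, mem_iInter₂.2 fun y _ => hxu y,
    Q, hQ, fun R hR => ?_⟩
  obtain ⟨y, hy, hRB⟩ := hQB R hR
  exact ⟨U y, hU y, (prod_mono (biInter_subset_of_mem hy) hRB).trans (huB y)⟩

end

theorem ultraparacompact_prod_compact_zeroDimensional_general (X Y : Type*)
    [TopologicalSpace X] (hX : Ultraparacompact X)
    [TopologicalSpace Y] [CompactSpace Y] (hY : ZeroDimensional Y) :
    Ultraparacompact (X × Y) := by
  intro 𝒰 h𝒰 hcov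
  obtain ⟨P, hP, hPW⟩ := hX
    {W | IsOpen W ∧ ∃ Q, IsClopenPartition Y Q ∧ ∀ R ∈ Q, ∃ U ∈ 𝒰, W ×ˢ R ⊆ U}
    (fun W hW => hW.1) <| eq_univ_of_forall fun x => by
      obtain ⟨W, hW, hxW, hWQ⟩ := exists_isOpen_isClopenPartition_prod_subset hY h𝒰 hcov x
      exact ⟨W, ⟨hW, hWQ⟩, hxW⟩
  have hPQ : ∀ S ∈ P, ∃ Q, IsClopenPartition Y Q ∧ ∀ R ∈ Q, ∃ U ∈ 𝒰, S ×ˢ R ⊆ U := by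
    intro S hS
    obtain ⟨W, ⟨-, Q, hQ, hQU⟩, hSW⟩ := hPW S hS
    refine ⟨Q, hQ, fun R hR => ?_⟩
    obtain ⟨U, hU, hWR⟩ := hQU R hR
    exact ⟨U, hU, (prod_mono hSW subset_rfl).trans hWR⟩
  choose! Q hQ hQU using hPQ
  refine ⟨_, hP.prod hQ, ?_⟩
  rintro _ ⟨S, hS, R, hR, rfl⟩
  exact hQU S hS R hR

/-- The product of an ultraparacompact Hausdorff space with a compact zero-dimensional
Hausdorff space is ultraparacompact. -/
theorem ultraparacompact_prod_compact_zeroDimensional (X Y : Type*)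
    [TopologicalSpace X] [T2Space X] (hX : Ultraparacompact X)
    [TopologicalSpace Y] [T2Space Y] [CompactSpace Y] (hY : ZeroDimensional Y) :
    Ultraparacompact (X × Y) :=
  ultraparacompact_prod_compact_zeroDimensional_general X Y hX hY
end

section
/- Let X be a zero-dimensional Hausdorff space and let C be a zero-dimensional compactification of X, i.e., C is a compact zero-dimensional Hausdorff space together with a dense topological embedding of X into C. Then X is ultraparacompact if and only if the product space X × C is ultranormal. -/
/-!
If `X` is ultraparacompact, so is `X × C`: by compactness of `C`, every `x` has an open
neighbourhood `V` such that `V × C` is cut into disjoint clopen boxes `V × B` lying in members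
of the cover, and a clopen partition of `X` refining these `V` gives one of `X × C`.
Ultraparacompact spaces are ultranormal.

Conversely, given an open cover `𝒰` of `X`, let `𝒱` be the clopen sets of `C` whose traces on
`X` lie in members of `𝒰`. A clopen set `D` separating the graph of `e` from `X × (C \ ⋃₀ 𝒱)`
has compact slices `D x ∋ e x` inside `⋃₀ 𝒱`, locally constant in `x`. The fibres of `x ↦ D x`
are clopen, and cutting each of them by the traces of a disjoint clopen shrinking of `𝒱` over
the common slice gives the required partition of `X`.
-/

open Function Set Topology TopologicalSpace

section Partitions

variable {X : Type*} [TopologicalSpace X]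

theorem IsClopenPartition.pairwise_disjoint {P : Set (Set X)} (hP : IsClopenPartition X P) :
    Pairwise (Disjoint on fun S : P ↦ (S : Set X)) := fun S T hST ↦
  disjoint_iff_inter_eq_empty.mpr (hP.2.2.1 S S.2 T T.2 (Subtype.coe_ne_coe.mpr hST))

theorem IsClopenPartition.isClopen_sUnion {P 𝒬 : Set (Set X)} (hP : IsClopenPartition X P)
    (h𝒬 : 𝒬 ⊆ P) : IsClopen (⋃₀ 𝒬) := by
  obtain ⟨hclopen, -, hdisj, hcov⟩ := hP
  have hcompl : (⋃₀ 𝒬)ᶜ = ⋃₀ (P \ 𝒬) := by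
    ext x
    obtain ⟨S, hS, hxS⟩ : x ∈ ⋃₀ P := hcov ▸ mem_univ x
    constructor
    · intro hx
      exact ⟨S, ⟨hS, fun hS𝒬 ↦ hx ⟨S, hS𝒬, hxS⟩⟩, hxS⟩
    · rintro ⟨T, ⟨hT, hT𝒬⟩, hxT⟩ ⟨T', hT', hxT'⟩
      have hne : T ≠ T' := fun h ↦ hT𝒬 (h ▸ hT')
      exact (hdisj T hT T' (h𝒬 hT') hne).subset ⟨hxT, hxT'⟩
  refine ⟨?_, isOpen_sUnion fun S hS ↦ (hclopen S (h𝒬 hS)).isOpen⟩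
  rw [← isOpen_compl_iff, hcompl]
  exact isOpen_sUnion fun S hS ↦ (hclopen S hS.1).isOpen

theorem exists_isClopenPartition_of_pairwise_disjoint {ι : Type*} {𝒰 : Set (Set X)}
    {F : ι → Set X} (hF : ∀ i, IsClopen (F i)) (hdisj : Pairwise (Disjoint on F))
    (hcov : ⋃ i, F i = univ) (href : ∀ i, (F i).Nonempty → ∃ U ∈ 𝒰, F i ⊆ U) :
    ∃ P : Set (Set X), IsClopenPartition X P ∧ ∀ S ∈ P, ∃ U ∈ 𝒰, S ⊆ U := by
  refine ⟨{S ∈ range F | S.Nonempty}, ⟨?_, fun S hS ↦ hS.2, ?_, ?_⟩, ?_⟩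
  · rintro _ ⟨⟨i, rfl⟩, -⟩
    exact hF i
  · rintro _ ⟨⟨i, rfl⟩, -⟩ _ ⟨⟨j, rfl⟩, -⟩ hij
    exact disjoint_iff_inter_eq_empty.mp (hdisj fun h ↦ hij (h ▸ rfl))
  · refine eq_univ_of_forall fun x ↦ ?_
    obtain ⟨i, hi⟩ := mem_iUnion.mp (hcov ▸ mem_univ x : x ∈ ⋃ i, F i)
    exact ⟨F i, ⟨mem_range_self i, x, hi⟩, hi⟩
  · rintro _ ⟨⟨i, rfl⟩, hne⟩
    exact href i hne

theorem Ultraparacompact.ultranormal (h : Ultraparacompact X) : Ultranormal X := by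
  intro R S hR hS hRS
  obtain ⟨P, hP, href⟩ := h {Rᶜ, Sᶜ}
    (by rintro U (rfl | rfl); exacts [hR.isOpen_compl, hS.isOpen_compl])
    (by rw [sUnion_pair, ← compl_inter, hRS.inter_eq, compl_empty])
  -- Every piece of `P` lies in `Rᶜ` or in `Sᶜ`, so the pieces missing `S` cover `R`.
  refine ⟨⋃₀ {T ∈ P | Disjoint T S}, hP.isClopen_sUnion fun T hT ↦ hT.1, fun x hx ↦ ?_, ?_⟩
  · obtain ⟨T, hT, hxT⟩ : x ∈ ⋃₀ P := hP.2.2.2 ▸ mem_univ x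
    obtain ⟨U, hU | hU, hTU⟩ := href T hT
    · exact absurd hx (hU ▸ hTU hxT : x ∈ Rᶜ)
    · exact ⟨T, ⟨hT, disjoint_compl_left.mono_left (hU ▸ hTU)⟩, hxT⟩
  · rw [← disjoint_iff_inter_eq_empty, disjoint_sUnion_right]
    exact fun T hT ↦ hT.2.symm

end Partitions

theorem IsCompact.exists_disjoint_clopen_shrinking {α ι : Type*} [TopologicalSpace α]
    {Q : Set α} (hQ : IsCompact Q) {V : ι → Set α} (hV : ∀ i, IsClopen (V i))
    (hQV : Q ⊆ ⋃ i, V i) :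
    ∃ W : ι → Set α, (∀ i, IsClopen (W i)) ∧ (∀ i, W i ⊆ V i) ∧ Pairwise (Disjoint on W) ∧
      Q ⊆ ⋃ i, W i ∧ {i | (W i).Nonempty}.Finite := by
  classical
  obtain ⟨t, ht⟩ := hQ.elim_finite_subcover V (fun i ↦ (hV i).isOpen) hQV
  obtain ⟨g, hgV, hsup, hdisj⟩ :=
    Fintype.exists_disjointed_le fun i : t ↦ (⟨V i, hV i⟩ : Clopens α)
  let W i : Set α := if hi : i ∈ t then g ⟨i, hi⟩ else ∅
  refine ⟨W, fun i ↦ ?_, fun i ↦ ?_, fun i j hij ↦ ?_, fun x hx ↦ ?_, ?_⟩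
  · unfold W
    split_ifs
    exacts [(g _).isClopen, isClopen_empty]
  · unfold W
    split_ifs with hi
    exacts [hgV ⟨i, hi⟩, empty_subset _]
  · by_cases hi : i ∈ t <;> by_cases hj : j ∈ t <;> simp only [W, hi, hj, Function.onFun,
      dif_pos, dif_neg, not_false_eq_true, disjoint_empty, empty_disjoint]
    exact Clopens.coe_disjoint.mpr (hdisj (by simpa using hij))
  · have hx' : x ∈ ((Finset.univ.sup g : Clopens α) : Set α) := by
      rw [hsup, Clopens.coe_finset_sup]
      simpa using ht hx
    simp only [Clopens.coe_finset_sup, Finset.mem_univ, iUnion_true, mem_iUnion] at hx'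
    obtain ⟨⟨i, hi⟩, hxi⟩ := hx'
    exact mem_iUnion.mpr ⟨i, by simpa [W, hi] using hxi⟩
  · refine t.finite_toSet.subset fun i hi ↦ ?_
    by_contra hit
    rw [Finset.mem_coe] at hit
    simp [W, hit] at hi

section Product

variable {X C : Type*} [TopologicalSpace X] [TopologicalSpace C] [CompactSpace C]

theorem isOpen_setOf_preimage_prodMk_subset {E : Set (X × C)} (hE : IsClosed E) {K : Set C}
    (hK : IsOpen K) : IsOpen {x | Prod.mk x ⁻¹' E ⊆ K} := by
  have : {x | Prod.mk x ⁻¹' E ⊆ K}ᶜ = Prod.fst '' (E ∩ univ ×ˢ Kᶜ) := by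
    ext x
    simp [not_subset]
  rw [← isClosed_compl_iff, this]
  exact isClosedMap_fst_of_compactSpace _ (hE.inter (isClosed_univ.prod hK.isClosed_compl))

theorem IsClopen.isLocallyConstant_preimage_prodMk {D : Set (X × C)} (hD : IsClopen D) :
    IsLocallyConstant fun x ↦ Prod.mk x ⁻¹' D := by
  rw [IsLocallyConstant.iff_exists_open]
  intro x
  have hslice : IsClopen (Prod.mk x ⁻¹' D) := hD.preimage (Continuous.prodMk_right x)
  refine ⟨_, (isOpen_setOf_preimage_prodMk_subset hD.isClosed hslice.isOpen).inter
    (isOpen_setOf_preimage_prodMk_subset hD.compl.isClosed hslice.compl.isOpen),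
    ⟨fun _ h ↦ h, fun _ h ↦ h⟩, fun y hy ↦ hy.1.antisymm ?_⟩
  exact compl_subset_compl.mp hy.2

theorem exists_isOpen_disjoint_clopen_cover_prod_subset (hC : ZeroDimensional C)
    {𝒲 : Set (Set (X × C))} (h𝒲 : ∀ W ∈ 𝒲, IsOpen W) (hcov : ⋃₀ 𝒲 = univ) (x : X) :
    ∃ V : Set X, IsOpen V ∧ x ∈ V ∧ ∃ g : C → Set C, (∀ c, IsClopen (g c)) ∧
      Pairwise (Disjoint on g) ∧ ⋃ c, g c = univ ∧
      ∀ c, (g c).Nonempty → ∃ W ∈ 𝒲, V ×ˢ g c ⊆ W := by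
  have hbox : ∀ c : C, ∃ A : Set X, ∃ B : Set C, IsOpen A ∧ IsClopen B ∧ x ∈ A ∧ c ∈ B ∧
      ∃ W ∈ 𝒲, A ×ˢ B ⊆ W := by
    intro c
    obtain ⟨W, hW, hxcW⟩ : (x, c) ∈ ⋃₀ 𝒲 := hcov ▸ mem_univ _
    obtain ⟨A, B', hA, hB', hxA, hcB', hABW⟩ := isOpen_prod_iff.mp (h𝒲 W hW) x c hxcW
    obtain ⟨B, hB, hcB, hBB'⟩ := hC.exists_subset_of_mem_open hcB' hB'
    exact ⟨A, B, hA, hB, hxA, hcB, W, hW, (prod_mono subset_rfl hBB').trans hABW⟩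
  choose A B hA hB hxA hcB W hW hABW using hbox
  obtain ⟨g, hg, hgB, hdisj, hgcov, hfin⟩ := isCompact_univ.exists_disjoint_clopen_shrinking hB
    fun c _ ↦ mem_iUnion.mpr ⟨c, hcB c⟩
  refine ⟨⋂ c ∈ {c | (g c).Nonempty}, A c, hfin.isOpen_biInter fun c _ ↦ hA c,
    mem_iInter₂.mpr fun c _ ↦ hxA c, g, hg, hdisj, univ_subset_iff.mp hgcov,
    fun c hc ↦ ⟨W c, hW c, ?_⟩⟩
  exact (Set.prod_mono (iInter₂_subset c hc) (hgB c)).trans (hABW c)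

theorem Ultraparacompact.prod (hC : ZeroDimensional C) (h : Ultraparacompact X) :
    Ultraparacompact (X × C) := by
  intro 𝒲 h𝒲 hcov
  choose V hV hxV g hg hdisj hgcov href using
    exists_isOpen_disjoint_clopen_cover_prod_subset hC h𝒲 hcov
  obtain ⟨P, hP, hPV⟩ := h (range V) (by rintro _ ⟨x, rfl⟩; exact hV x)
    (eq_univ_of_forall fun x ↦ ⟨V x, mem_range_self x, hxV x⟩)
  have hpt : ∀ S : P, ∃ x, (S : Set X) ⊆ V x := fun S ↦ by
    obtain ⟨_, ⟨x, rfl⟩, hSV⟩ := hPV S S.2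
    exact ⟨x, hSV⟩
  choose pt hpt using hpt
  refine exists_isClopenPartition_of_pairwise_disjoint
    (F := fun p : P × C ↦ (p.1 : Set X) ×ˢ g (pt p.1) p.2)
    (fun p ↦ (hP.1 _ p.1.2).prod (hg _ _)) ?_ ?_ ?_
  · rintro ⟨S, c⟩ ⟨T, d⟩ hne
    simp only [Function.onFun, disjoint_prod]
    by_cases hST : S = T
    · subst hST
      exact Or.inr (hdisj _ fun h ↦ hne (h ▸ rfl))
    · exact Or.inl (hP.pairwise_disjoint hST)
  · refine eq_univ_of_forall fun ⟨x, c⟩ ↦ ?_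
    obtain ⟨S, hS, hxS⟩ : x ∈ ⋃₀ P := hP.2.2.2 ▸ mem_univ x
    obtain ⟨d, hcd⟩ := mem_iUnion.mp (hgcov (pt ⟨S, hS⟩) ▸ mem_univ c)
    exact mem_iUnion.mpr ⟨(⟨S, hS⟩, d), hxS, hcd⟩
  · rintro ⟨S, c⟩ hne
    obtain ⟨W, hW, hVW⟩ := href (pt S) c hne.snd
    exact ⟨W, hW, (prod_mono (hpt S) subset_rfl).trans hVW⟩

end Product

theorem Ultranormal.exists_isLocallyConstant_isCompact_mem_subset {X C : Type*}
    [TopologicalSpace X] [TopologicalSpace C] [T2Space C] [CompactSpace C]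
    (hN : Ultranormal (X × C)) {e : X → C} (he : Continuous e) {O : Set C} (hO : IsOpen O)
    (heO : ∀ x, e x ∈ O) :
    ∃ f : X → Set C, IsLocallyConstant f ∧ ∀ x, IsCompact (f x) ∧ e x ∈ f x ∧ f x ⊆ O := by
  -- Slice a clopen set separating the graph of `e` from `X × Oᶜ`.
  obtain ⟨D, hD, hgraphD, hDO⟩ := hN {p | p.2 = e p.1} (univ ×ˢ Oᶜ)
    (isClosed_eq continuous_snd (he.comp continuous_fst)) (isClosed_univ.prod hO.isClosed_compl)
    (disjoint_left.mpr fun p hp hpO ↦ hpO.2 (hp ▸ heO p.1))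
  refine ⟨fun x ↦ Prod.mk x ⁻¹' D, hD.isLocallyConstant_preimage_prodMk, fun x ↦
    ⟨(hD.preimage (Continuous.prodMk_right x)).isClosed.isCompact, hgraphD rfl, fun c hc ↦ ?_⟩⟩
  by_contra hcO
  exact hDO.subset (show (x, c) ∈ _ from ⟨⟨mem_univ x, hcO⟩, hc⟩)

theorem Ultranormal.ultraparacompact_of_isEmbedding {X C : Type*} [TopologicalSpace X]
    [TopologicalSpace C] [T2Space C] [CompactSpace C] (hC : ZeroDimensional C) {e : X → C}
    (he : IsEmbedding e) (hN : Ultranormal (X × C)) : Ultraparacompact X := by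
  intro 𝒰 h𝒰 hcov
  let 𝒱 : Set (Set C) := {O | IsClopen O ∧ ∃ U ∈ 𝒰, e ⁻¹' O ⊆ U}
  have he𝒱 : ∀ x, e x ∈ ⋃ O : 𝒱, (O : Set C) := by
    intro x
    obtain ⟨U, hU, hxU⟩ : x ∈ ⋃₀ 𝒰 := hcov ▸ mem_univ x
    obtain ⟨O', hO', rfl⟩ := he.isOpen_iff.mp (h𝒰 U hU)
    obtain ⟨O, hO, hxO, hOO'⟩ := hC.exists_subset_of_mem_open hxU hO'
    exact mem_iUnion.mpr ⟨⟨O, hO, _, hU, preimage_mono hOO'⟩, hxO⟩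
  obtain ⟨f, hf, hfx⟩ := hN.exists_isLocallyConstant_isCompact_mem_subset he.continuous
    (isOpen_iUnion fun O : 𝒱 ↦ O.2.1.isOpen) he𝒱
  -- The shrinking depends on the slice `Q = f x` only, so the pieces of one fibre of `f` are
  -- disjoint.
  have hshrink : ∀ Q ∈ range f, ∃ W : 𝒱 → Set C, (∀ O, IsClopen (W O)) ∧ (∀ O, W O ⊆ O) ∧
      Pairwise (Disjoint on W) ∧ Q ⊆ ⋃ O, W O := by
    rintro _ ⟨x, rfl⟩
    obtain ⟨W, hW, hWO, hdisj, hcov, -⟩ :=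
      (hfx x).1.exists_disjoint_clopen_shrinking (fun O : 𝒱 ↦ O.2.1) (hfx x).2.2
    exact ⟨W, hW, hWO, hdisj, hcov⟩
  choose W hW hWO hdisj hWcov using hshrink
  refine exists_isClopenPartition_of_pairwise_disjoint
    (F := fun p : range f × 𝒱 ↦ f ⁻¹' {p.1.1} ∩ e ⁻¹' W p.1.1 p.1.2 p.2)
    (fun p ↦ (hf.isClopen_fiber _).inter ((hW _ _ _).preimage he.continuous)) ?_ ?_ ?_
  · rintro ⟨⟨Q, hQ⟩, O⟩ ⟨⟨Q', hQ'⟩, O'⟩ hne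
    by_cases hQQ' : Q = Q'
    · subst hQQ'
      have hOO' : O ≠ O' := fun h ↦ hne (h ▸ rfl)
      exact ((hdisj Q hQ hOO').preimage e).mono inter_subset_right inter_subset_right
    · exact ((disjoint_singleton.mpr hQQ').preimage f).mono inter_subset_left inter_subset_left
  · refine eq_univ_of_forall fun x ↦ ?_
    obtain ⟨O, hO⟩ := mem_iUnion.mp (hWcov (f x) ⟨x, rfl⟩ (hfx x).2.1)
    exact mem_iUnion.mpr ⟨(⟨f x, x, rfl⟩, O), rfl, hO⟩
  · rintro ⟨⟨Q, hQ⟩, O⟩ -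
    obtain ⟨U, hU, hOU⟩ := O.2.2
    exact ⟨U, hU, inter_subset_right.trans ((preimage_mono (hWO Q hQ O)).trans hOU)⟩

theorem ultraparacompact_iff_prod_compactification_ultranormal_general (X C : Type*)
    [TopologicalSpace X]
    [TopologicalSpace C] [T2Space C] [CompactSpace C] (hC : ZeroDimensional C)
    (e : X → C) (he : Topology.IsEmbedding e) :
    Ultraparacompact X ↔ Ultranormal (X × C) :=
  ⟨fun h ↦ (h.prod hC).ultranormal, fun hN ↦ hN.ultraparacompact_of_isEmbedding hC he⟩

/-- If `C` is a zero-dimensional compactification of a zero-dimensional Hausdorff space `X`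
(i.e. `C` is compact Hausdorff zero-dimensional and `X` embeds densely into `C`), then
`X` is ultraparacompact iff `X × C` is ultranormal. -/
theorem ultraparacompact_iff_prod_compactification_ultranormal (X C : Type*)
    [TopologicalSpace X] [T2Space X] (hX : ZeroDimensional X)
    [TopologicalSpace C] [T2Space C] [CompactSpace C] (hC : ZeroDimensional C)
    (e : X → C) (he : Topology.IsEmbedding e) (hdense : DenseRange e) :
    Ultraparacompact X ↔ Ultranormal (X × C) :=
  ultraparacompact_iff_prod_compactification_ultranormal_general X C hC e he
end

section
/- Let X be a completely regular Hausdorff P-space, i.e., every countable intersection of open subsets of X is open. Then X is paracompact if and only if X is ultraparacompact. -/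
/-!
In a P-space every closed `G_δ` set is open, so the zero set of a Urysohn function separating two
disjoint closed sets is clopen: a normal P-space is ultranormal. In a paracompact ultranormal space
an open cover has a locally finite closed shrinking, which can be thickened to a locally finite
clopen cover; removing from each member the union of its predecessors in a well-order keeps it
clopen, because locally finite unions of closed sets are closed, and gives a clopen partition.
Conversely a clopen partition is a locally finite open refinement.
-/

open Set Function

section Disjointification

variable {α ι : Type*} (r : ι → ι → Prop)

def wellOrderDisjointed (C : ι → Set α) (i : ι) : Set α :=
  C i \ ⋃ (j) (_ : r j i), C j

theorem wellOrderDisjointed_subset (C : ι → Set α) (i : ι) :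
    wellOrderDisjointed r C i ⊆ C i :=
  sdiff_subset

theorem iUnion_wellOrderDisjointed [IsWellOrder ι r] (C : ι → Set α) :
    ⋃ i, wellOrderDisjointed r C i = ⋃ i, C i := by
  refine (iUnion_mono (wellOrderDisjointed_subset r C)).antisymm fun x hx => ?_
  obtain ⟨i, hxi, hmin⟩ :=
    (IsWellFounded.wf : WellFounded r).has_min {i | x ∈ C i} (mem_iUnion.1 hx)
  refine mem_iUnion.2 ⟨i, hxi, fun hx' => ?_⟩
  obtain ⟨j, hji, hxj⟩ := mem_iUnion₂.1 hx'
  exact hmin j hxj hji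

theorem pairwise_disjoint_wellOrderDisjointed [Std.Trichotomous r] (C : ι → Set α) :
    Pairwise (Disjoint on wellOrderDisjointed r C) := by
  have key : ∀ i j, r i j → Disjoint (wellOrderDisjointed r C i) (wellOrderDisjointed r C j) :=
    fun i j hij => disjoint_left.2 fun x hxi hxj => hxj.2 (mem_iUnion₂.2 ⟨i, hij, hxi.1⟩)
  intro i j hij
  rcases trichotomous_of r i j with h | h | h
  · exact key i j h
  · exact absurd h hij
  · exact (key j i h).symm

end Disjointification

section Topology

variable {X : Type*} [TopologicalSpace X]

theorem IsGδ.isOpen_of_iInter_nat_isOpen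
    (hP : ∀ s : ℕ → Set X, (∀ n, IsOpen (s n)) → IsOpen (⋂ n, s n)) {s : Set X} (hs : IsGδ s) :
    IsOpen s := by
  obtain ⟨t, ht, rfl⟩ := hs.eq_iInter_nat
  exact hP t ht

theorem ultranormal_of_iInter_nat_isOpen [NormalSpace X]
    (hP : ∀ s : ℕ → Set X, (∀ n, IsOpen (s n)) → IsOpen (⋂ n, s n)) : Ultranormal X := by
  intro R S hR hS hRS
  obtain ⟨f, hfR, hfS, -⟩ := exists_continuous_zero_one_of_isClosed hR hS hRS
  have hclosed : IsClosed (f ⁻¹' {0}) := isClosed_singleton.preimage f.continuous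
  have hopen : IsOpen (f ⁻¹' {0}) :=
    (isClosed_singleton.isGδ.preimage f.continuous).isOpen_of_iInter_nat_isOpen hP
  refine ⟨f ⁻¹' {0}, ⟨hclosed, hopen⟩, fun x hx => hfR hx, ?_⟩
  refine eq_empty_of_forall_notMem fun x ⟨hxS, hx0⟩ => ?_
  simp [hfS hxS] at hx0

theorem Ultranormal.exists_clopen_between (hX : Ultranormal X) {K U : Set X} (hK : IsClosed K)
    (hU : IsOpen U) (hKU : K ⊆ U) : ∃ C, IsClopen C ∧ K ⊆ C ∧ C ⊆ U := by
  obtain ⟨C, hC, hKC, hUC⟩ :=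
    hX K Uᶜ hK hU.isClosed_compl (disjoint_compl_right_iff_subset.2 hKU)
  refine ⟨C, hC, hKC, fun x hxC => ?_⟩
  by_contra hxU
  exact (eq_empty_iff_forall_notMem.1 hUC) x ⟨hxU, hxC⟩

theorem Ultranormal.normalSpace_s18 (hX : Ultranormal X) : NormalSpace X := by
  refine ⟨fun R S hR hS hRS => ?_⟩
  obtain ⟨C, hC, hRC, hSC⟩ := hX R S hR hS hRS
  exact ⟨C, Cᶜ, hC.isOpen, hC.compl.isOpen, hRC,
    subset_compl_iff_disjoint_right.2 (disjoint_iff_inter_eq_empty.2 hSC), disjoint_compl_right⟩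

theorem Ultranormal.exists_iUnion_eq_clopen_subset (hX : Ultranormal X)
    {ι : Type*} {u : ι → Set X} (uo : ∀ i, IsOpen (u i)) (uf : ∀ x, {i | x ∈ u i}.Finite)
    (uU : ⋃ i, u i = univ) :
    ∃ C : ι → Set X, ⋃ i, C i = univ ∧ (∀ i, IsClopen (C i)) ∧ ∀ i, C i ⊆ u i := by
  have := hX.normalSpace_s18
  obtain ⟨v, vU, vc, vu⟩ := exists_iUnion_eq_closed_subset uo uf uU
  choose C hC hvC hCu using fun i => hX.exists_clopen_between (vc i) (uo i) (vu i)
  exact ⟨C, univ_subset_iff.1 (vU.ge.trans (iUnion_mono hvC)), hC, hCu⟩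

theorem isClopen_wellOrderDisjointed {ι : Type*} (r : ι → ι → Prop) {C : ι → Set X}
    (hC : ∀ i, IsClopen (C i)) (hCf : LocallyFinite C) (i : ι) :
    IsClopen (wellOrderDisjointed r C i) := by
  have hopen : IsOpen (⋃ (j) (_ : r j i), C j) := isOpen_biUnion fun j _ => (hC j).2
  have hclosed : IsClosed (⋃ (j) (_ : r j i), C j) := by
    have := (hCf.comp_injective (Subtype.val_injective (p := (r · i)))).isClosed_iUnion
      fun j => (hC j.1).1
    simpa only [comp_apply, iUnion_subtype] using this
  exact ⟨(hC i).1.sdiff hopen, (hC i).2.sdiff hclosed⟩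

theorem isClopenPartition_of_pairwise_disjoint {ι : Type*} {D : ι → Set X}
    (hD : ∀ i, IsClopen (D i)) (hdisj : Pairwise (Disjoint on D)) (hcov : ⋃ i, D i = univ) :
    IsClopenPartition X {S | S ∈ range D ∧ S.Nonempty} := by
  refine ⟨?_, fun S hS => hS.2, ?_, ?_⟩
  · rintro S ⟨⟨i, rfl⟩, -⟩
    exact hD i
  · rintro S ⟨⟨i, rfl⟩, -⟩ T ⟨⟨j, rfl⟩, -⟩ hST
    exact disjoint_iff_inter_eq_empty.1 (hdisj fun hij => hST (congrArg D hij))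
  · refine eq_univ_of_forall fun x => ?_
    obtain ⟨i, hi⟩ := mem_iUnion.1 (hcov ▸ mem_univ x)
    exact ⟨D i, ⟨mem_range_self i, x, hi⟩, hi⟩

theorem exists_isClopenPartition_of_locallyFinite {ι : Type*} {C : ι → Set X}
    (hC : ∀ i, IsClopen (C i)) (hCf : LocallyFinite C) (hcov : ⋃ i, C i = univ) :
    ∃ P, IsClopenPartition X P ∧ ∀ S ∈ P, ∃ i, S ⊆ C i := by
  let r := @WellOrderingRel ι
  refine ⟨_, isClopenPartition_of_pairwise_disjoint (isClopen_wellOrderDisjointed r hC hCf)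
    (pairwise_disjoint_wellOrderDisjointed r C)
    ((iUnion_wellOrderDisjointed r C).trans hcov), ?_⟩
  rintro S ⟨⟨i, rfl⟩, -⟩
  exact ⟨i, wellOrderDisjointed_subset r C i⟩

theorem Ultranormal.ultraparacompact [ParacompactSpace X] (hX : Ultranormal X) :
    Ultraparacompact X := by
  intro 𝒰 h𝒰o h𝒰U
  obtain ⟨v, vo, vU, vf, v𝒰⟩ := precise_refinement (fun U : 𝒰 => (U : Set X))
    (fun U => h𝒰o U U.2) (sUnion_eq_iUnion ▸ h𝒰U)
  obtain ⟨C, CU, hC, Cv⟩ := hX.exists_iUnion_eq_clopen_subset vo vf.point_finite vU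
  obtain ⟨P, hP, hPC⟩ := exists_isClopenPartition_of_locallyFinite hC (vf.subset Cv) CU
  refine ⟨P, hP, fun S hS => ?_⟩
  obtain ⟨U, hSU⟩ := hPC S hS
  exact ⟨U, U.2, hSU.trans ((Cv U).trans (v𝒰 U))⟩

theorem IsClopenPartition.locallyFinite {P : Set (Set X)} (hP : IsClopenPartition X P) :
    LocallyFinite ((↑) : P → Set X) := by
  intro x
  obtain ⟨S, hS, hxS⟩ := mem_sUnion.1 (hP.2.2.2 ▸ mem_univ x)
  refine ⟨S, (hP.1 S hS).2.mem_nhds hxS, (finite_singleton ⟨S, hS⟩).subset ?_⟩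
  rintro T ⟨y, hyT, hyS⟩
  by_contra hTS
  have hdisj := hP.2.2.1 T T.2 S hS fun h => hTS (Subtype.ext h)
  exact eq_empty_iff_forall_notMem.1 hdisj y ⟨hyT, hyS⟩

theorem Ultraparacompact.paracompactSpace (hX : Ultraparacompact X) : ParacompactSpace X := by
  refine ⟨fun ι u uo uU => ?_⟩
  obtain ⟨P, hP, hPu⟩ := hX (range u) (forall_mem_range.2 uo) (sUnion_range u ▸ uU)
  refine ⟨P, (↑), fun S => (hP.1 S S.2).2, ?_, hP.locallyFinite, fun S => ?_⟩
  · rw [← sUnion_eq_iUnion]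
    exact hP.2.2.2
  · obtain ⟨U, ⟨i, rfl⟩, hSU⟩ := hPu S S.2
    exact ⟨i, hSU⟩

end Topology

theorem pspace_paracompact_iff_ultraparacompact_general (X : Type*) [TopologicalSpace X]
    [T2Space X]
    (hP : ∀ s : ℕ → Set X, (∀ n, IsOpen (s n)) → IsOpen (⋂ n, s n)) :
    ParacompactSpace X ↔ Ultraparacompact X :=
  ⟨fun _ => (ultranormal_of_iInter_nat_isOpen hP).ultraparacompact,
    Ultraparacompact.paracompactSpace⟩

/-- For a completely regular Hausdorff P-space (countable intersections of open sets
are open), paracompactness and ultraparacompactness coincide. -/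
theorem pspace_paracompact_iff_ultraparacompact (X : Type*) [TopologicalSpace X]
    [T2Space X] [CompletelyRegularSpace X]
    (hP : ∀ s : ℕ → Set X, (∀ n, IsOpen (s n)) → IsOpen (⋂ n, s n)) :
    ParacompactSpace X ↔ Ultraparacompact X :=
  pspace_paracompact_iff_ultraparacompact_general X hP
end

section
/- Let G be a topological group whose underlying topological space is an ultraparacompact Hausdorff P-space. Then every open cover of G has a refinement that is a partition of G into left cosets of open subgroups of G. -/
open scoped Pointwise

/-!
Countable intersections of neighbourhoods of `1` are neighbourhoods of `1`, so intersecting a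
sequence of neighbourhoods with `Wₙ₊₁ / Wₙ₊₁ ⊆ Wₙ` gives an open subgroup inside any
neighbourhood of `1`: left cosets of open subgroups form a basis. Using ultraparacompactness,
build clopen partitions `P₀, P₁, …` refining the cover, such that every piece of `Pₙ₊₁` lies in
a coset `x Hₙ` which lies in a piece of `Pₙ`. The pieces of `x` in `Pₙ₊₁` and `Pₙ` then sandwich
`x Hₙ`, so the intersection over `n` of the pieces of `x` is the coset `x ⋂ₙ Hₙ`, and
`⋂ₙ Hₙ` is open because `G` is a P-space. These intersections partition `G`.
-/

open scoped Topology

theorem exists_seq_of_forall_exists {α : Type*} {p : α → Prop} {r : α → α → Prop}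
    (h : ∀ a, p a → ∃ b, p b ∧ r a b) {a₀ : α} (h₀ : p a₀) :
    ∃ s : ℕ → α, s 0 = a₀ ∧ ∀ n, p (s n) ∧ r (s n) (s (n + 1)) := by
  choose next hnext using h
  let step : {a // p a} → {a // p a} := fun a => ⟨next a a.2, (hnext a a.2).1⟩
  refine ⟨fun n => (step^[n] ⟨a₀, h₀⟩).1, rfl, fun n => ⟨(step^[n] _).2, ?_⟩⟩
  simp only [Function.iterate_succ_apply']
  exact (hnext _ _).2

def IsPSpace (X : Type*) [TopologicalSpace X] : Prop :=
  ∀ s : ℕ → Set X, (∀ n, IsOpen (s n)) → IsOpen (⋂ n, s n)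

theorem IsPSpace.iInter_mem_nhds {X : Type*} [TopologicalSpace X] (hX : IsPSpace X) {x : X}
    {s : ℕ → Set X} (hs : ∀ n, s n ∈ 𝓝 x) : ⋂ n, s n ∈ 𝓝 x := by
  have hx : x ∈ ⋂ n, interior (s n) :=
    Set.mem_iInter.2 fun n => mem_interior_iff_mem_nhds.2 (hs n)
  exact Filter.mem_of_superset ((hX _ fun _ => isOpen_interior).mem_nhds hx)
    (Set.iInter_mono fun _ => interior_subset)

theorem IsClopenPartition.exists_mem_s19 {X : Type*} [TopologicalSpace X] {Q : Set (Set X)}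
    (hQ : IsClopenPartition X Q) (x : X) : ∃ S ∈ Q, x ∈ S :=
  Set.mem_sUnion.1 (hQ.2.2.2 ▸ Set.mem_univ x)

theorem IsClopenPartition.eq_of_mem {X : Type*} [TopologicalSpace X] {Q : Set (Set X)}
    (hQ : IsClopenPartition X Q) {S T : Set X} (hS : S ∈ Q) (hT : T ∈ Q) {x : X}
    (hxS : x ∈ S) (hxT : x ∈ T) : S = T := by
  by_contra hne
  exact (hQ.2.2.1 S hS T hT hne ▸ Set.mem_inter hxS hxT : x ∈ (∅ : Set X))

theorem Subgroup.exists_coe_eq_iInter_of_div_mem {G : Type*} [Group G] {W : ℕ → Set G}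
    (one_mem : ∀ n, (1 : G) ∈ W n)
    (div_mem : ∀ n, ∀ a ∈ W (n + 1), ∀ b ∈ W (n + 1), a / b ∈ W n) :
    ∃ H : Subgroup G, (H : Set G) = ⋂ n, W n := by
  have inv_mem : ∀ n, ∀ a ∈ W (n + 1), a⁻¹ ∈ W n := fun n a ha => by
    simpa using div_mem n 1 (one_mem _) a ha
  refine ⟨{ carrier := ⋂ n, W n
            one_mem' := Set.mem_iInter.2 one_mem
            mul_mem' := fun {a b} ha hb => Set.mem_iInter.2 fun n => ?_
            inv_mem' := fun ha => Set.mem_iInter.2 fun n => inv_mem n _ (Set.mem_iInter.1 ha _) },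
          rfl⟩
  simpa using div_mem n a (Set.mem_iInter.1 ha _) b⁻¹ (inv_mem _ b (Set.mem_iInter.1 hb _))

theorem iInter_eq_smul_iInf {G : Type*} [Group G] {S : ℕ → Set G} {H : ℕ → Subgroup G} {x : G}
    (hSH : ∀ n, S (n + 1) ⊆ x • (H n : Set G)) (hHS : ∀ n, x • (H n : Set G) ⊆ S n) :
    ⋂ n, S n = x • ((⨅ n, H n : Subgroup G) : Set G) := by
  rw [Subgroup.coe_iInf, Set.smul_set_iInter]
  exact (Set.subset_iInter fun n => (Set.iInter_subset S (n + 1)).trans (hSH n)).antisymm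
    (Set.iInter_mono hHS)

section CosetRefinement

variable {G : Type*} [Group G] [TopologicalSpace G]

def IsCosetRefinement (Q 𝒰 : Set (Set G)) : Prop :=
  ∀ S ∈ Q, ∃ (g : G) (H : Subgroup G), IsOpen (H : Set G) ∧ S ⊆ g • (H : Set G) ∧
    ∃ U ∈ 𝒰, g • (H : Set G) ⊆ U

theorem IsCosetRefinement.exists_smul_subset {Q' Q : Set (Set G)} (h : IsCosetRefinement Q' Q)
    (hQ : IsClopenPartition G Q) {S' S : Set G} (hS' : S' ∈ Q') (hS : S ∈ Q) {x : G}
    (hxS' : x ∈ S') (hxS : x ∈ S) :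
    ∃ H : Subgroup G, IsOpen (H : Set G) ∧ S' ⊆ x • (H : Set G) ∧ x • (H : Set G) ⊆ S := by
  obtain ⟨g, H, hHo, hS'H, T, hT, hHT⟩ := h S' hS'
  have hgx : g • (H : Set G) = x • (H : Set G) :=
    (leftCoset_eq_iff H).2 ((mem_leftCoset_iff g).1 (hS'H hxS'))
  rw [hgx] at hS'H hHT
  have hTS : T = S := hQ.eq_of_mem hT hS (hHT (mem_own_leftCoset H.toSubmonoid x)) hxS
  exact ⟨H, hHo, hS'H, hTS ▸ hHT⟩

variable [IsTopologicalGroup G]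

theorem IsPSpace.exists_isOpen_subgroup_subset (hG : IsPSpace G) {U : Set G} (hU : U ∈ 𝓝 1) :
    ∃ H : Subgroup G, IsOpen (H : Set G) ∧ (H : Set G) ⊆ U := by
  obtain ⟨W, rfl, hW⟩ := exists_seq_of_forall_exists
    (p := fun V : Set G => V ∈ 𝓝 1) (r := fun V W => ∀ a ∈ W, ∀ b ∈ W, a / b ∈ V)
    (fun _ hV => exists_nhds_split_inv hV) hU
  obtain ⟨H, hH⟩ := Subgroup.exists_coe_eq_iInter_of_div_mem
    (fun n => mem_of_mem_nhds (hW n).1) fun n => (hW n).2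
  refine ⟨H, H.isOpen_of_mem_nhds (g := 1) ?_, hH ▸ Set.iInter_subset W 0⟩
  exact hH ▸ hG.iInter_mem_nhds fun n => (hW n).1

theorem IsPSpace.exists_isOpen_subgroup_smul_subset (hG : IsPSpace G) {x : G} {U : Set G}
    (hU : U ∈ 𝓝 x) : ∃ H : Subgroup G, IsOpen (H : Set G) ∧ x • (H : Set G) ⊆ U := by
  have : (x * ·) ⁻¹' U ∈ 𝓝 1 := (continuous_const_mul x).tendsto' 1 x (mul_one x) hU
  obtain ⟨H, hHo, hHU⟩ := hG.exists_isOpen_subgroup_subset this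
  exact ⟨H, hHo, Set.image_subset_iff.2 hHU⟩

theorem Ultraparacompact.exists_isCosetRefinement (hP : IsPSpace G) (hG : Ultraparacompact G)
    {𝒰 : Set (Set G)} (h𝒰o : ∀ U ∈ 𝒰, IsOpen U) (h𝒰c : ⋃₀ 𝒰 = Set.univ) :
    ∃ Q, IsClopenPartition G Q ∧ IsCosetRefinement Q 𝒰 := by
  let 𝒱 : Set (Set G) := {C | ∃ (g : G) (H : Subgroup G), IsOpen (H : Set G) ∧
      C = g • (H : Set G) ∧ ∃ U ∈ 𝒰, C ⊆ U}
  have h𝒱o : ∀ C ∈ 𝒱, IsOpen C := by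
    rintro C ⟨g, H, hHo, rfl, -⟩
    exact hHo.smul g
  have h𝒱c : ⋃₀ 𝒱 = Set.univ := Set.eq_univ_of_forall fun x => by
    obtain ⟨U, hU, hxU⟩ := Set.mem_sUnion.1 (h𝒰c ▸ Set.mem_univ x)
    obtain ⟨H, hHo, hHU⟩ := hP.exists_isOpen_subgroup_smul_subset ((h𝒰o U hU).mem_nhds hxU)
    exact ⟨_, ⟨x, H, hHo, rfl, U, hU, hHU⟩, mem_own_leftCoset H.toSubmonoid x⟩
  obtain ⟨Q, hQ, hQ𝒱⟩ := hG 𝒱 h𝒱o h𝒱c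
  refine ⟨Q, hQ, fun S hS => ?_⟩
  obtain ⟨_, ⟨g, H, hHo, rfl, hU⟩, hSC⟩ := hQ𝒱 S hS
  exact ⟨g, H, hHo, hSC, hU⟩

end CosetRefinement

theorem ultraparacompact_pspace_group_coset_refinement_general (G : Type*) [Group G]
    [TopologicalSpace G] [IsTopologicalGroup G]
    (hP : ∀ s : ℕ → Set G, (∀ n, IsOpen (s n)) → IsOpen (⋂ n, s n))
    (hG : Ultraparacompact G) :
    ∀ 𝒰 : Set (Set G), (∀ U ∈ 𝒰, IsOpen U) → ⋃₀ 𝒰 = Set.univ →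
      ∃ P : Set (Set G),
        (∀ S ∈ P, ∃ H : Subgroup G, IsOpen (H : Set G) ∧ ∃ g : G, S = g • (H : Set G)) ∧
        (∀ S ∈ P, ∀ T ∈ P, S ≠ T → S ∩ T = ∅) ∧ ⋃₀ P = Set.univ ∧
        ∀ S ∈ P, ∃ U ∈ 𝒰, S ⊆ U := by
  intro 𝒰 h𝒰o h𝒰c
  obtain ⟨P₀, hP₀, hP₀𝒰⟩ := hG.exists_isCosetRefinement hP h𝒰o h𝒰c
  obtain ⟨P, rfl, hPn⟩ := exists_seq_of_forall_exists (p := IsClopenPartition G)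
    (r := fun Q Q' => IsCosetRefinement Q' Q)
    (fun Q hQ => hG.exists_isCosetRefinement hP (fun S hS => (hQ.1 S hS).isOpen) hQ.2.2.2) hP₀
  choose S hSP hxS using fun n x => (hPn n).1.exists_mem_s19 x
  choose H hHo hSH hHS using fun n x => (hPn n).2.exists_smul_subset (hPn n).1
    (hSP (n + 1) x) (hSP n x) (hxS (n + 1) x) (hxS n x)
  refine ⟨Set.range fun x => ⋂ n, S n x, ?_, ?_, ?_, ?_⟩
  · rintro _ ⟨x, rfl⟩
    refine ⟨⨅ n, H n x, ?_, x, iInter_eq_smul_iInf (hSH · x) (hHS · x)⟩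
    rw [Subgroup.coe_iInf]
    exact hP _ (hHo · x)
  · rintro _ ⟨x, rfl⟩ _ ⟨y, rfl⟩ hne
    refine Set.eq_empty_of_forall_notMem fun z hz => hne (Set.iInter_congr fun n => ?_)
    exact (hPn n).1.eq_of_mem (hSP n x) (hSP n y)
      (Set.mem_iInter.1 hz.1 n) (Set.mem_iInter.1 hz.2 n)
  · exact Set.eq_univ_of_forall fun x => ⟨_, ⟨x, rfl⟩, Set.mem_iInter.2 (hxS · x)⟩
  · rintro _ ⟨x, rfl⟩
    obtain ⟨_, K, -, hSK, U, hU, hKU⟩ := hP₀𝒰 (S 0 x) (hSP 0 x)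
    exact ⟨U, hU, (Set.iInter_subset _ 0).trans (hSK.trans hKU)⟩

/-- If `G` is a topological group whose underlying space is an ultraparacompact Hausdorff
P-space, then every open cover of `G` has a refinement that is a partition of `G` into
left cosets of open subgroups of `G`. -/
theorem ultraparacompact_pspace_group_coset_refinement (G : Type*) [Group G]
    [TopologicalSpace G] [IsTopologicalGroup G] [T2Space G]
    (hP : ∀ s : ℕ → Set G, (∀ n, IsOpen (s n)) → IsOpen (⋂ n, s n))
    (hG : Ultraparacompact G) :
    ∀ 𝒰 : Set (Set G), (∀ U ∈ 𝒰, IsOpen U) → ⋃₀ 𝒰 = Set.univ →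
      ∃ P : Set (Set G),
        (∀ S ∈ P, ∃ H : Subgroup G, IsOpen (H : Set G) ∧ ∃ g : G, S = g • (H : Set G)) ∧
        (∀ S ∈ P, ∀ T ∈ P, S ≠ T → S ∩ T = ∅) ∧ ⋃₀ P = Set.univ ∧
        ∀ S ∈ P, ∃ U ∈ 𝒰, S ⊆ U :=
  ultraparacompact_pspace_group_coset_refinement_general G hP hG
end
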